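/- arXiv:2201.05893 — 13 statements merged into one kernel-verified Lean document; each statement's English description precedes it below -/
import Mathlib

section
/- Let δ be a square-integrable real random variable and X a random element of a measurable space. Then for every α ∈ (0,1], CVaR_α(δ) ≤ CVaR_α(τ(X)), where τ(X) = E[δ | X]. -/
open MeasureTheory

/-- Conditional value at risk at level `α` of the random variable `Z` under measure `μ`:
`CVaR_α(Z) = sup_β (β + α⁻¹ E[min (Z − β) 0])`. -/
noncomputable def cvar {Ω : Type*} [MeasurableSpace Ω] (μ : Measure Ω) (Z : Ω → ℝ) (α : ℝ) : ℝ :=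
  ⨆ β : ℝ, β + α⁻¹ * ∫ ω, min (Z ω - β) 0 ∂μ

/-- For a square-integrable ITE `δ` and covariates `X`,
`CVaR_α(δ) ≤ CVaR_α(E[δ | X])` for every `α ∈ (0,1]`. -/
theorem cvar_ite_le_cvar_cate {Ω 𝒳 : Type*} [MeasurableSpace Ω] {m𝒳 : MeasurableSpace 𝒳}
    (μ : Measure Ω) [IsProbabilityMeasure μ]
    (X : Ω → 𝒳) (hX : Measurable X)
    (δ : Ω → ℝ) (hδ : MemLp δ 2 μ)
    (α : ℝ) (hα : α ∈ Set.Ioc (0 : ℝ) 1) :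
    cvar μ δ α ≤ cvar μ (μ[δ | MeasurableSpace.comap X m𝒳]) α := by
  obtain ⟨hα0, hα1⟩ := hα
  let m := MeasurableSpace.comap X m𝒳
  have hm : m ≤ _ := hX.comap_le
  have hδint : Integrable δ μ := hδ.integrable (by norm_num)
  set τ : Ω → ℝ := μ[δ | m] with hτ_def
  have hτint : Integrable τ μ := integrable_condExp
  -- integrability of the truncations
  have hmin : ∀ (Z : Ω → ℝ) (β : ℝ), Integrable Z μ →
      Integrable (fun ω => min (Z ω - β) 0) μ := fun Z β hZ =>
    (hZ.sub (integrable_const β)).inf (integrable_const 0)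
  -- key inequality on integrals
  have key : ∀ β : ℝ, ∫ ω, min (δ ω - β) 0 ∂μ ≤ ∫ ω, min (τ ω - β) 0 ∂μ := by
    intro β
    have h1 : μ[fun ω => min (δ ω - β) 0 | m] ≤ᵐ[μ] fun ω => min (τ ω - β) 0 := by
      have hle1 : μ[fun ω => min (δ ω - β) 0 | m] ≤ᵐ[μ] μ[fun ω => δ ω - β | m] :=
        condExp_mono (hmin δ β hδint) (hδint.sub (integrable_const β))
          (Filter.Eventually.of_forall fun ω => min_le_left _ _)
      have hle2 : μ[fun ω => min (δ ω - β) 0 | m] ≤ᵐ[μ] (0 : Ω → ℝ) := by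
        have := condExp_mono (μ := μ) (m := m) (hmin δ β hδint) (integrable_const (0 : ℝ))
          (Filter.Eventually.of_forall fun ω => min_le_right _ _)
        simp only [condExp_const (μ := μ) hm (0:ℝ)] at this
        exact this
      have hsub : μ[fun ω => δ ω - β | m] =ᵐ[μ] fun ω => τ ω - β := by
        have h := condExp_sub (m := m) (μ := μ) hδint (integrable_const β)
        have hc : μ[fun _ : Ω => β | m] = fun _ => β := condExp_const (μ := μ) hm β
        filter_upwards [h] with ω hω
        rw [hc] at hω
        exact hω
      filter_upwards [hle1, hle2, hsub] with ω h1 h2 h3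
      exact le_min (h1.trans_eq h3) h2
    calc ∫ ω, min (δ ω - β) 0 ∂μ
        = ∫ ω, (μ[fun ω => min (δ ω - β) 0 | m]) ω ∂μ :=
          (integral_condExp hm).symm
      _ ≤ ∫ ω, min (τ ω - β) 0 ∂μ :=
          integral_mono_ae integrable_condExp (hmin τ β hτint) h1
  -- the RHS family is bounded above
  have hbdd : BddAbove (Set.range fun β : ℝ => β + α⁻¹ * ∫ ω, min (τ ω - β) 0 ∂μ) := by
    refine ⟨max 0 (α⁻¹ * ∫ ω, τ ω ∂μ), ?_⟩
    rintro _ ⟨β, rfl⟩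
    rcases le_or_gt β 0 with hβ | hβ
    · refine le_max_of_le_left ?_
      have : α⁻¹ * ∫ ω, min (τ ω - β) 0 ∂μ ≤ 0 := by
        apply mul_nonpos_of_nonneg_of_nonpos (by positivity)
        apply integral_nonpos
        intro ω; exact min_le_right _ _
      linarith
    · refine le_max_of_le_right ?_
      have hint : ∫ ω, min (τ ω - β) 0 ∂μ ≤ ∫ ω, (τ ω - β) ∂μ :=
        integral_mono (hmin τ β hτint) (hτint.sub (integrable_const β))
          fun ω => min_le_left _ _
      have hsub : ∫ ω, (τ ω - β) ∂μ = (∫ ω, τ ω ∂μ) - β := by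
        rw [integral_sub hτint (integrable_const β), integral_const]
        simp
      have hα' : (1:ℝ) ≤ α⁻¹ := (one_le_inv_iff₀.mpr ⟨hα0, hα1⟩ : _)
      have h2 : α⁻¹ * ∫ ω, min (τ ω - β) 0 ∂μ ≤ α⁻¹ * ((∫ ω, τ ω ∂μ) - β) := by
        apply mul_le_mul_of_nonneg_left (by rw [← hsub]; exact hint) (by positivity)
      have h3 : β ≤ α⁻¹ * β := le_mul_of_one_le_left hβ.le hα'
      nlinarith
  refine ciSup_mono hbdd fun β => ?_
  exact add_le_add_right (mul_le_mul_of_nonneg_left (key β) (by positivity)) β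
end

section
/- Let δ be a square-integrable real random variable, X a random element of a measurable space, τ(X) = E[δ | X], and b ≥ 0. If |τ(X) − δ| ≤ b almost surely, then for every α ∈ (0,1], CVaR_α(δ) ≥ sup_{β ∈ ℝ} ( β + (1/(2α)) E[min(τ(X) − b − β, 0)] + (1/(2α)) E[min(τ(X) + b − β, 0)] ). -/
open MeasureTheory

lemma integrable_min_zero' {Ω : Type*} [MeasurableSpace Ω] {μ : Measure Ω} [IsFiniteMeasure μ]
    {f : Ω → ℝ} (hf : Integrable f μ) :
    Integrable (fun ω => min (f ω) 0) μ := by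
  exact (hf.inf (integrable_const (0 : ℝ))).congr (ae_of_all _ fun ω => rfl)

lemma chord_ineq (b β t d : ℝ) (hb : 0 ≤ b) (h1 : |t - d| ≤ b) :
    min (t - b - β) 0 + (min (t + b - β) 0 - min (t - b - β) 0) / (2 * b) * (d - (t - b))
      ≤ min (d - β) 0 := by
  rcases eq_or_lt_of_le hb with h0 | hbpos
  · have ht : t = d := by
      have := abs_nonpos_iff.mp (h1.trans_eq h0.symm)
      linarith [sub_eq_zero.mp this]
    subst ht
    simp [← h0]
  · have hld : t - b ≤ d := by cases' abs_le.mp h1 with h2 h3; linarith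
    have hdu : d ≤ t + b := by cases' abs_le.mp h1 with h2 h3; linarith
    set gl := min (t - b - β) 0 with hgl
    set gu := min (t + b - β) 0 with hgu
    have hgl1 : gl ≤ t - b - β := min_le_left _ _
    have hgl0 : gl ≤ 0 := min_le_right _ _
    have hgu0 : gu ≤ 0 := min_le_right _ _
    have hmono : gl ≤ gu := by apply min_le_min _ le_rfl; linarith
    have hlip : gu - gl ≤ 2 * b := by
      rcases le_or_gt (t + b - β) 0 with h | h
      · rw [hgu, min_eq_left h, hgl, min_eq_left (by linarith)]; linarith
      · rw [hgu, min_eq_right h.le]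
        have : -(2*b) ≤ gl := by rw [hgl]; apply le_min <;> linarith
        linarith
    set c := (gu - gl) / (2 * b) with hc
    have hc0 : 0 ≤ c := div_nonneg (by linarith) (by linarith)
    have hc1 : c ≤ 1 := by rw [hc, div_le_one (by linarith)]; exact hlip
    have hceq : c * (2 * b) = gu - gl := by rw [hc, div_mul_cancel₀]; positivity
    apply le_min
    · nlinarith [mul_nonneg (sub_nonneg.mpr hc1) (sub_nonneg.mpr hld)]
    · nlinarith [mul_le_mul_of_nonneg_left (by linarith : d - (t - b) ≤ 2 * b) hc0]

lemma min_zero_sub_bounds (x y : ℝ) (hxy : x ≤ y) :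
    0 ≤ min y 0 - min x 0 ∧ min y 0 - min x 0 ≤ y - x := by
  constructor
  · have : min x 0 ≤ min y 0 := min_le_min hxy le_rfl
    linarith
  · rcases le_or_gt y 0 with h | h
    · rw [min_eq_left h, min_eq_left (by linarith : x ≤ (0:ℝ))]
    · rw [min_eq_right h.le]
      have : x - y ≤ min x 0 := le_min (by linarith) (by linarith)
      linarith

/-- If `|τ(X) − δ| ≤ b` a.s. where `τ(X) = E[δ | X]`, then for `α ∈ (0,1]`,
`CVaR_α(δ) ≥ sup_β (β + (2α)⁻¹ E[min(τ(X) − b − β, 0)] + (2α)⁻¹ E[min(τ(X) + b − β, 0)])`. -/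
theorem cvar_lower_bound_range {Ω 𝒳 : Type*} [MeasurableSpace Ω] {m𝒳 : MeasurableSpace 𝒳}
    (μ : Measure Ω) [IsProbabilityMeasure μ]
    (X : Ω → 𝒳) (hX : Measurable X)
    (δ : Ω → ℝ) (hδ : MemLp δ 2 μ)
    (τX : Ω → ℝ) (hτX : τX = μ[δ | MeasurableSpace.comap X m𝒳])
    (b : ℝ) (hb : 0 ≤ b)
    (hres : ∀ᵐ ω ∂μ, |τX ω - δ ω| ≤ b)
    (α : ℝ) (hα : α ∈ Set.Ioc (0 : ℝ) 1) :
    (⨆ β : ℝ, β + (2 * α)⁻¹ * ∫ ω, min (τX ω - b - β) 0 ∂μ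
        + (2 * α)⁻¹ * ∫ ω, min (τX ω + b - β) 0 ∂μ) ≤ cvar μ δ α := by
  obtain ⟨hα0, hα1⟩ := hα
  have hm : MeasurableSpace.comap X m𝒳 ≤ ‹MeasurableSpace Ω› := hX.comap_le
  have hδint : Integrable δ μ := hδ.integrable one_le_two
  have hτint : Integrable τX μ := by rw [hτX]; exact integrable_condExp
  have hτsm : StronglyMeasurable[MeasurableSpace.comap X m𝒳] τX := by
    rw [hτX]; exact stronglyMeasurable_condExp
  -- boundedness of the cvar family
  have hImin : ∀ β : ℝ, Integrable (fun ω => min (δ ω - β) 0) μ := fun β =>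
    integrable_min_zero' (by simpa [sub_sub, Pi.sub_def] using hδint.sub (integrable_const β))
  have hbdd : BddAbove (Set.range fun β : ℝ => β + α⁻¹ * ∫ ω, min (δ ω - β) 0 ∂μ) := by
    refine ⟨max 0 (α⁻¹ * ∫ ω, δ ω ∂μ), ?_⟩
    rintro x ⟨β', rfl⟩
    have hI0 : (∫ ω, min (δ ω - β') 0 ∂μ) ≤ 0 :=
      integral_nonpos fun ω => min_le_right _ _
    have hαinv1 : 1 ≤ α⁻¹ := by
      nlinarith [mul_inv_cancel₀ (ne_of_gt hα0), inv_nonneg.mpr hα0.le]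
    rcases le_total β' 0 with hβ | hβ
    · refine le_trans ?_ (le_max_left _ _)
      nlinarith [mul_nonpos_of_nonneg_of_nonpos (inv_nonneg.mpr hα0.le) hI0]
    · refine le_trans ?_ (le_max_right _ _)
      have hI : (∫ ω, min (δ ω - β') 0 ∂μ) ≤ (∫ ω, δ ω ∂μ) - β' := by
        have h1 : (∫ ω, min (δ ω - β') 0 ∂μ) ≤ ∫ ω, (δ ω - β') ∂μ :=
          integral_mono_ae (hImin β') (hδint.sub (integrable_const β'))
            (ae_of_all _ fun ω => min_le_left _ _)
        rwa [integral_sub hδint (integrable_const β'), integral_const, probReal_univ,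
          smul_eq_mul, one_mul] at h1
      nlinarith [mul_le_mul_of_nonneg_left hI (inv_nonneg.mpr hα0.le)]
  refine ciSup_le fun β => ?_
  -- notation
  set gl : Ω → ℝ := fun ω => min (τX ω - b - β) 0 with hgl_def
  set gu : Ω → ℝ := fun ω => min (τX ω + b - β) 0 with hgu_def
  set h : Ω → ℝ := fun ω => (gu ω - gl ω) / (2 * b) with hh_def
  have hIA : Integrable gl μ :=
    integrable_min_zero' (by simpa [sub_sub, Pi.sub_def] using hτint.sub (integrable_const (b + β)))
  have hIB : Integrable gu μ := by
    apply integrable_min_zero'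
    have h2 := (hτint.add (integrable_const (b - β)))
    exact h2.congr (by filter_upwards with ω; simp only [Pi.add_apply]; ring)
  have hφ : Continuous fun t : ℝ => (min (t + b - β) 0 - min (t - b - β) 0) / (2 * b) := by
    fun_prop
  have hh_sm : StronglyMeasurable[MeasurableSpace.comap X m𝒳] h :=
    hφ.comp_stronglyMeasurable hτsm
  have hh_asm : AEStronglyMeasurable h μ := (hh_sm.mono hm).aestronglyMeasurable
  have hh_bd : ∀ ω, ‖h ω‖ ≤ 1 := by
    intro ω
    obtain ⟨hn0, hn2⟩ := min_zero_sub_bounds (τX ω - b - β) (τX ω + b - β) (by linarith)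
    rw [Real.norm_eq_abs, hh_def]
    rcases eq_or_lt_of_le hb with h0 | hbpos
    · have hz : gu ω - gl ω = 0 := le_antisymm (by simp only [hgu_def, hgl_def]; linarith)
        (by simp only [hgu_def, hgl_def]; linarith)
      simp [hz]
    · rw [abs_div, abs_of_nonneg (by simp only [hgu_def, hgl_def]; linarith),
        abs_of_pos (by linarith : (0:ℝ) < 2 * b), div_le_one (by linarith)]
      simp only [hgu_def, hgl_def]; linarith
  have hhδint : Integrable (fun ω => h ω * δ ω) μ := hδint.bdd_mul hh_asm (ae_of_all _ hh_bd)
  have hhτint : Integrable (fun ω => h ω * τX ω) μ := hτint.bdd_mul hh_asm (ae_of_all _ hh_bd)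
  have hhint : Integrable h μ := by
    simpa using (integrable_const (1 : ℝ)).bdd_mul hh_asm (ae_of_all _ hh_bd)
  -- key orthogonality: ∫ h δ = ∫ h τX
  have key0 : (∫ ω, h ω * δ ω ∂μ) = ∫ ω, h ω * τX ω ∂μ := by
    have hcond : μ[h * δ|MeasurableSpace.comap X m𝒳]
        =ᵐ[μ] h * μ[δ|MeasurableSpace.comap X m𝒳] :=
      condExp_mul_of_stronglyMeasurable_left hh_sm (by simpa [Pi.mul_def] using hhδint) hδint
    calc (∫ ω, h ω * δ ω ∂μ) = ∫ ω, (h * δ) ω ∂μ := by simp [Pi.mul_apply]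
      _ = ∫ ω, (μ[h * δ|MeasurableSpace.comap X m𝒳]) ω ∂μ := (integral_condExp hm).symm
      _ = ∫ ω, (h * μ[δ|MeasurableSpace.comap X m𝒳]) ω ∂μ := integral_congr_ae hcond
      _ = ∫ ω, h ω * τX ω ∂μ := by rw [hτX]; simp only [Pi.mul_apply]
  -- pointwise chord inequality
  have hpt : ∀ᵐ ω ∂μ, gl ω + h ω * (δ ω - (τX ω - b)) ≤ min (δ ω - β) 0 :=
    hres.mono fun ω hω => chord_ineq b β (τX ω) (δ ω) hb hω
  have hmul2 : Integrable (fun ω => h ω * (δ ω - (τX ω - b))) μ := by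
    refine Integrable.bdd_mul ?_ hh_asm (ae_of_all _ hh_bd)
    have h2 := (hδint.sub hτint).add (integrable_const b)
    apply h2.congr
    filter_upwards with ω
    simp only [Pi.add_apply, Pi.sub_apply]; ring
  have hkey : (∫ ω, gl ω ∂μ) + ((∫ ω, gu ω ∂μ) - ∫ ω, gl ω ∂μ) / 2
      ≤ ∫ ω, min (δ ω - β) 0 ∂μ := by
    have hint_lhs : Integrable (fun ω => gl ω + h ω * (δ ω - (τX ω - b))) μ :=
      hIA.add hmul2
    have hmono := integral_mono_ae hint_lhs (hImin β) hpt
    rw [integral_add hIA hmul2] at hmono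
    have e1 : Integrable (fun ω => h ω * δ ω - h ω * τX ω) μ := hhδint.sub hhτint
    have hbh' : Integrable (fun ω => b * h ω) μ := hhint.const_mul b
    have hadd2 : (∫ ω, (h ω * δ ω - h ω * τX ω + b * h ω) ∂μ)
        = (∫ ω, (h ω * δ ω - h ω * τX ω) ∂μ) + ∫ ω, b * h ω ∂μ := integral_add e1 hbh'
    have hsub2 : (∫ ω, (h ω * δ ω - h ω * τX ω) ∂μ)
        = (∫ ω, h ω * δ ω ∂μ) - ∫ ω, h ω * τX ω ∂μ := integral_sub hhδint hhτint
    have hexp : (∫ ω, h ω * (δ ω - (τX ω - b)) ∂μ)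
        = (∫ ω, h ω * δ ω ∂μ) - (∫ ω, h ω * τX ω ∂μ) + ∫ ω, b * h ω ∂μ := by
      rw [← hsub2, ← hadd2]
      congr 1; funext ω; ring
    have hbh : (∫ ω, b * h ω ∂μ) = ((∫ ω, gu ω ∂μ) - ∫ ω, gl ω ∂μ) / 2 := by
      have hsub3 : (∫ ω, (gu ω - gl ω) ∂μ) = (∫ ω, gu ω ∂μ) - ∫ ω, gl ω ∂μ :=
        integral_sub hIB hIA
      have hdiv3 : (∫ ω, ((gu ω - gl ω) / 2) ∂μ) = (∫ ω, (gu ω - gl ω) ∂μ) / 2 :=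
        integral_div 2 _
      rw [← hsub3, ← hdiv3]
      congr 1; funext ω
      rcases eq_or_lt_of_le hb with h0 | hbpos
      · obtain ⟨hn0, hn2⟩ := min_zero_sub_bounds (τX ω - b - β) (τX ω + b - β) (by linarith)
        have hz : gu ω - gl ω = 0 := le_antisymm (by simp only [hgu_def, hgl_def]; linarith)
          (by simp only [hgu_def, hgl_def]; linarith)
        simp [hh_def, hz]
      · rw [hh_def]; field_simp
    rw [hexp, key0, hbh] at hmono
    linarith
  -- conclude
  have step : β + (2 * α)⁻¹ * (∫ ω, gl ω ∂μ) + (2 * α)⁻¹ * (∫ ω, gu ω ∂μ)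
      ≤ β + α⁻¹ * ∫ ω, min (δ ω - β) 0 ∂μ := by
    have heq : (2 * α)⁻¹ * (∫ ω, gl ω ∂μ) + (2 * α)⁻¹ * (∫ ω, gu ω ∂μ)
        = α⁻¹ * ((∫ ω, gl ω ∂μ) + ((∫ ω, gu ω ∂μ) - ∫ ω, gl ω ∂μ) / 2) := by
      field_simp; ring
    have h3 := mul_le_mul_of_nonneg_left hkey (inv_nonneg.mpr hα0.le)
    linarith
  exact step.trans (le_ciSup hbdd β)
end

section
/- Let δ be a square-integrable real random variable, X a random element of a measurable space, τ(X) = E[δ | X], and b ≥ 0. If τ(X) − δ ≤ b almost surely, then for every α ∈ (0,1], CVaR_α(δ) ≥ CVaR_α(τ(X)) − b. -/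
open MeasureTheory

/-- If `τ(X) − δ ≤ b` a.s. where `τ(X) = E[δ | X]`, then for every `α ∈ (0,1]`,
`CVaR_α(δ) ≥ CVaR_α(τ(X)) − b`. -/
theorem cvar_lower_bound_one_sided_range {Ω 𝒳 : Type*} [MeasurableSpace Ω]
    {m𝒳 : MeasurableSpace 𝒳}
    (μ : Measure Ω) [IsProbabilityMeasure μ]
    (X : Ω → 𝒳) (hX : Measurable X)
    (δ : Ω → ℝ) (hδ : MemLp δ 2 μ)
    (τX : Ω → ℝ) (hτX : τX = μ[δ | MeasurableSpace.comap X m𝒳])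
    (b : ℝ) (hb : 0 ≤ b)
    (hres : ∀ᵐ ω ∂μ, τX ω - δ ω ≤ b)
    (α : ℝ) (hα : α ∈ Set.Ioc (0 : ℝ) 1) :
    cvar μ τX α - b ≤ cvar μ δ α := by
  obtain ⟨hα0, hα1⟩ := hα
  have hinv0 : (0:ℝ) ≤ α⁻¹ := (inv_pos.2 hα0).le
  have hone : (1:ℝ) ≤ α⁻¹ := (one_le_inv₀ hα0).2 hα1
  have hδint : Integrable δ μ := hδ.integrable one_le_two
  have hτint : Integrable τX μ := hτX ▸ integrable_condExp
  have hmin : ∀ (Z : Ω → ℝ), Integrable Z μ → ∀ β : ℝ,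
      Integrable (fun ω => min (Z ω - β) 0) μ := by
    intro Z hZ β
    have := (hZ.sub (integrable_const β)).inf (integrable_const (0:ℝ))
    exact this.congr (ae_of_all _ fun ω => rfl)
  have hbdd : ∀ (Z : Ω → ℝ), Integrable Z μ →
      BddAbove (Set.range fun β : ℝ => β + α⁻¹ * ∫ ω, min (Z ω - β) 0 ∂μ) := by
    intro Z hZ
    refine ⟨∫ ω, Z ω ∂μ, ?_⟩
    rintro _ ⟨β, rfl⟩
    have h1 : ∫ ω, min (Z ω - β) 0 ∂μ ≤ (∫ ω, Z ω ∂μ) - β := by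
      have := integral_mono (hmin Z hZ β) (hZ.sub (integrable_const β))
        (fun ω => min_le_left _ _)
      simpa [integral_sub hZ (integrable_const β)] using this
    have h2 : ∫ ω, min (Z ω - β) 0 ∂μ ≤ 0 := by
      have := integral_mono (hmin Z hZ β) (integrable_const (0:ℝ))
        (fun ω => min_le_right _ _)
      simpa using this
    rcases le_total β (∫ ω, Z ω ∂μ) with h | h
    · have : α⁻¹ * ∫ ω, min (Z ω - β) 0 ∂μ ≤ 0 :=
        mul_nonpos_of_nonneg_of_nonpos hinv0 h2
      simpa using add_le_add h this |>.trans (by simp)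
    · have h3 : α⁻¹ * ∫ ω, min (Z ω - β) 0 ∂μ ≤ α⁻¹ * ((∫ ω, Z ω ∂μ) - β) :=
        mul_le_mul_of_nonneg_left h1 hinv0
      have h4 : α⁻¹ * ((∫ ω, Z ω ∂μ) - β) ≤ 1 * ((∫ ω, Z ω ∂μ) - β) :=
        mul_le_mul_of_nonpos_right hone (by linarith)
      simp only [one_mul] at h4
      linarith
  rw [sub_le_iff_le_add, cvar, cvar]
  apply ciSup_le
  intro β
  have hmono : ∫ ω, min (τX ω - β) 0 ∂μ ≤ ∫ ω, min (δ ω - (β - b)) 0 ∂μ := by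
    apply integral_mono_ae (hmin τX hτint β) (hmin δ hδint (β - b))
    filter_upwards [hres] with ω hω
    exact min_le_min (by linarith) le_rfl
  have key : β + α⁻¹ * ∫ ω, min (τX ω - β) 0 ∂μ ≤
      ((β - b) + α⁻¹ * ∫ ω, min (δ ω - (β - b)) 0 ∂μ) + b := by
    have := mul_le_mul_of_nonneg_left hmono hinv0
    linarith
  refine key.trans (add_le_add_left ?_ b)
  exact le_ciSup (hbdd δ hδint) (β - b)
end

section
/- Let δ be a square-integrable real random variable, X a random element of a measurable space, τ(X) = E[δ | X], and σ̄² : 𝒳 → [0,∞) a measurable integrable function. If Var(δ | X) ≤ σ̄²(X) almost surely, then for every α ∈ (0,1], CVaR_α(δ) ≥ sup_{β ∈ ℝ} ( β + (1/(2α)) E[ τ(X) − β − sqrt((τ(X) − β)² + σ̄²(X)) ] ). -/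
open MeasureTheory

section Aux

variable {Ω : Type*} {m m0 : MeasurableSpace Ω}

lemma aux_condExp_sq_jensen (hm : m ≤ m0) (μ : Measure Ω) [IsProbabilityMeasure μ]
    {δ : Ω → ℝ} (hδ : MemLp δ 2 μ) :
    ∀ᵐ ω ∂μ, ((μ[δ|m]) ω) ^ 2 ≤ (μ[fun ω' => δ ω' ^ 2|m]) ω := by
  haveI : IsFiniteMeasure (μ.trim hm) := isFiniteMeasure_trim hm
  have hδi : Integrable δ μ := hδ.integrable one_le_two
  have hδ2 : Integrable (fun ω => δ ω ^ 2) μ := hδ.integrable_sq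
  have key : ∀ q : ℚ, ∀ᵐ ω ∂μ,
      2 * (q : ℝ) * (μ[δ|m]) ω - (q : ℝ) ^ 2 ≤ (μ[fun ω' => δ ω' ^ 2|m]) ω := by
    intro q
    set c : ℝ := (q : ℝ) with hc
    have hint : Integrable (fun ω => 2 * c * δ ω - c ^ 2) μ :=
      (hδi.const_mul _).sub (integrable_const _)
    have hle : (fun ω => 2 * c * δ ω - c ^ 2) ≤ᵐ[μ] fun ω => δ ω ^ 2 := by
      filter_upwards with ω
      nlinarith [sq_nonneg (δ ω - c)]
    have h1 := condExp_mono (μ := μ) (m := m) hint hδ2 hle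
    have hsmul : μ[fun ω => 2 * c * δ ω|m] =ᵐ[μ] fun ω => 2 * c * (μ[δ|m]) ω := by
      have h := condExp_smul (μ := μ) (m := m) (2 * c) δ
      have e1 : (2 * c) • δ = fun ω => 2 * c * δ ω := by funext ω; simp [smul_eq_mul]
      rw [e1] at h
      refine h.trans ?_
      filter_upwards with ω
      simp [smul_eq_mul]
    have hsub := condExp_sub (μ := μ) (m := m) (hδi.const_mul (2 * c))
      (integrable_const (c ^ 2))
    have hconst : μ[(fun _ : Ω => c ^ 2)|m] = fun _ => c ^ 2 := condExp_const hm _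
    have e2 : (fun ω => 2 * c * δ ω - c ^ 2)
        = (fun ω => 2 * c * δ ω) - (fun _ => c ^ 2) := rfl
    rw [e2] at h1
    filter_upwards [h1, hsub, hsmul] with ω h1 h2 h3
    have : (μ[(fun ω => 2 * c * δ ω) - fun _ => c ^ 2|m]) ω
        = 2 * c * (μ[δ|m]) ω - c ^ 2 := by
      rw [h2]; simp [hconst, h3]
    linarith [this ▸ h1]
  filter_upwards [ae_all_iff.mpr key] with ω hω
  refine le_of_forall_pos_le_add fun ε hε => ?_
  obtain ⟨q, hq⟩ := exists_rat_near ((μ[δ|m]) ω) (Real.sqrt_pos.mpr hε)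
  have h1 : ((μ[δ|m]) ω - (q : ℝ)) ^ 2 < ε := by
    have h2 := abs_lt.mp hq
    nlinarith [Real.sq_sqrt hε.le]
  nlinarith [hω q]

lemma aux_condExp_memL2 (hm : m ≤ m0) (μ : Measure Ω) [IsProbabilityMeasure μ]
    {δ : Ω → ℝ} (hδ : MemLp δ 2 μ) : MemLp (μ[δ|m]) 2 μ := by
  haveI : IsFiniteMeasure (μ.trim hm) := isFiniteMeasure_trim hm
  have hmeas : AEStronglyMeasurable (μ[δ|m]) μ :=
    (stronglyMeasurable_condExp.mono hm).aestronglyMeasurable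
  refine (memLp_two_iff_integrable_sq hmeas).mpr ?_
  refine Integrable.mono' (integrable_condExp (m := m) (f := fun ω' => δ ω' ^ 2))
    ((stronglyMeasurable_condExp.mono hm).measurable.pow_const 2).aestronglyMeasurable ?_
  filter_upwards [aux_condExp_sq_jensen hm μ hδ] with ω hω
  rw [Real.norm_eq_abs, abs_of_nonneg (sq_nonneg _)]
  exact hω

lemma aux_abs_le (hm : m ≤ m0) (μ : Measure Ω) [IsProbabilityMeasure μ]
    {δ : Ω → ℝ} (hδ : MemLp δ 2 μ)
    {w : Ω → ℝ} (hwm : Measurable[m] w) (hwnn : ∀ ω, 0 ≤ w ω) (hwi : Integrable w μ)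
    (hvar : ∀ᵐ ω ∂μ, (μ[fun ω' => (δ ω' - (μ[δ|m]) ω') ^ 2|m]) ω ≤ w ω) (β : ℝ) :
    ∫ ω, |δ ω - β| ∂μ ≤ ∫ ω, Real.sqrt (((μ[δ|m]) ω - β) ^ 2 + w ω) ∂μ := by
  haveI : IsFiniteMeasure (μ.trim hm) := isFiniteMeasure_trim hm
  set τ : Ω → ℝ := μ[δ|m] with hτdef
  have hτm : Measurable[m] τ := stronglyMeasurable_condExp.measurable
  have hτm0 : Measurable τ := hτm.mono hm le_rfl
  have hwm0 : Measurable w := hwm.mono hm le_rfl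
  have hδi : Integrable δ μ := hδ.integrable one_le_two
  have hτ2 : MemLp τ 2 μ := aux_condExp_memL2 hm μ hδ
  have hτi : Integrable τ μ := hτ2.integrable one_le_two
  have hd2 : Integrable (fun ω => (δ ω - τ ω) ^ 2) μ := (hδ.sub hτ2).integrable_sq
  have hdb2 : Integrable (fun ω => (δ ω - β) ^ 2) μ := (hδ.sub (memLp_const β)).integrable_sq
  have hτβ2 : Integrable (fun ω => (τ ω - β) ^ 2) μ := (hτ2.sub (memLp_const β)).integrable_sq
  have habs : Integrable (fun ω => |δ ω - β|) μ := (hδi.sub (integrable_const β)).abs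
  -- integrability of the sqrt bound
  have hsq0i : Integrable (fun ω => Real.sqrt ((τ ω - β) ^ 2 + w ω)) μ := by
    have hb : Integrable (fun ω => 1 + ((τ ω - β) ^ 2 + w ω)) μ :=
      (integrable_const (1:ℝ)).add (hτβ2.add hwi)
    refine Integrable.mono' hb
      (((hτm0.sub measurable_const).pow_const 2).add hwm0).sqrt.aestronglyMeasurable ?_
    filter_upwards with ω
    rw [Real.norm_eq_abs, abs_of_nonneg (Real.sqrt_nonneg _)]
    have h1 : 0 ≤ (τ ω - β) ^ 2 + w ω := add_nonneg (sq_nonneg _) (hwnn ω)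
    nlinarith [Real.sq_sqrt h1, Real.sqrt_nonneg ((τ ω - β) ^ 2 + w ω)]
  refine le_of_forall_pos_le_add fun ε hε => ?_
  set e : ℝ := ε ^ 2 with hedef
  have he : 0 < e := by positivity
  set g : Ω → ℝ := fun ω => (τ ω - β) ^ 2 + w ω + e with hgdef
  have hg_pos : ∀ ω, 0 < g ω := fun ω => by have := hwnn ω; positivity
  set s : Ω → ℝ := fun ω => Real.sqrt (g ω) with hsdef
  have hs_pos : ∀ ω, 0 < s ω := fun ω => Real.sqrt_pos.mpr (hg_pos ω)
  have hs_sq : ∀ ω, s ω ^ 2 = g ω := fun ω => Real.sq_sqrt (hg_pos ω).le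
  have hgm : Measurable[m] g :=
    (((hτm.sub measurable_const).pow_const 2).add hwm).add measurable_const
  have hsm : Measurable[m] s := hgm.sqrt
  have hsm0 : Measurable s := hsm.mono hm le_rfl
  have hgi : Integrable g μ := (hτβ2.add hwi).add (integrable_const e)
  have hsi : Integrable s μ := by
    have hb : Integrable (fun ω => 1 + g ω) μ := (integrable_const (1:ℝ)).add hgi
    refine Integrable.mono' hb hsm0.aestronglyMeasurable ?_
    filter_upwards with ω
    rw [Real.norm_eq_abs, abs_of_nonneg (Real.sqrt_nonneg _)]
    nlinarith [hs_sq ω, (hs_pos ω).le]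
  set φ : Ω → ℝ := fun ω => (2 * s ω)⁻¹ with hφdef
  have hφm : Measurable[m] φ := (hsm.const_mul 2).inv
  have hφnn : ∀ ω, 0 ≤ φ ω := fun ω => by have := hs_pos ω; positivity
  have hφbd : ∀ ω, φ ω ≤ (2 * ε)⁻¹ := by
    intro ω
    have h1 : ε ≤ s ω := by
      rw [hsdef]
      calc ε = Real.sqrt (ε ^ 2) := (Real.sqrt_sq hε.le).symm
      _ ≤ Real.sqrt (g ω) := by
          refine Real.sqrt_le_sqrt ?_
          have h2 : g ω = (τ ω - β) ^ 2 + w ω + ε ^ 2 := rfl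
          have := hwnn ω
          nlinarith [sq_nonneg (τ ω - β)]
    exact inv_anti₀ (by positivity) (by linarith)
  -- pointwise bound |δ - β| ≤ s/2 + φ * (δ-β)^2
  have pointA : ∀ ω, |δ ω - β| ≤ s ω / 2 + φ ω * (δ ω - β) ^ 2 := by
    intro ω
    have hs := hs_pos ω
    have h1 : |δ ω - β| * (2 * s ω) ≤ s ω ^ 2 + (δ ω - β) ^ 2 := by
      nlinarith [sq_nonneg (s ω - |δ ω - β|), sq_abs (δ ω - β)]
    have h2 : φ ω * (2 * s ω) = 1 := by
      rw [hφdef]; field_simp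
    nlinarith [hφnn ω]
  -- integrability of φ * (δ-β)^2
  have h_int_fg : Integrable (fun ω => φ ω * (δ ω - β) ^ 2) μ := by
    refine Integrable.mono' (hdb2.const_mul (2 * ε)⁻¹)
      ((hφm.mono hm le_rfl).aestronglyMeasurable.mul hdb2.aestronglyMeasurable) ?_
    filter_upwards with ω
    rw [Real.norm_eq_abs, abs_of_nonneg (mul_nonneg (hφnn ω) (sq_nonneg _))]
    exact mul_le_mul_of_nonneg_right (hφbd ω) (sq_nonneg _)
  -- pull-out property
  have h_pull : μ[φ * (fun ω => (δ ω - β) ^ 2)|m] =ᵐ[μ] φ * μ[fun ω => (δ ω - β) ^ 2|m] :=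
    condExp_mul_of_stronglyMeasurable_left hφm.stronglyMeasurable h_int_fg hdb2
  -- conditional second moment bound
  have hC : ∀ᵐ ω ∂μ, (μ[fun ω' => (δ ω' - β) ^ 2|m]) ω ≤ (τ ω - β) ^ 2 + w ω := by
    have hψm : Measurable[m] (fun ω => 2 * (τ ω - β)) := (hτm.sub measurable_const).const_mul 2
    have hθi : Integrable (fun ω => δ ω - τ ω) μ := hδi.sub hτi
    have hBi : Integrable (fun ω => (2 * (τ ω - β)) * (δ ω - τ ω)) μ := by
      refine Integrable.mono' (hτβ2.add hd2)
        (((hψm.mono hm le_rfl).aemeasurable.aestronglyMeasurable).mul hθi.1) ?_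
      filter_upwards with ω
      simp only [Pi.add_apply]
      rw [Real.norm_eq_abs, abs_mul, abs_mul, abs_two]
      nlinarith [sq_nonneg (|τ ω - β| - |δ ω - τ ω|), sq_abs (τ ω - β), sq_abs (δ ω - τ ω),
        abs_nonneg (τ ω - β), abs_nonneg (δ ω - τ ω)]
    have hθ0 : μ[fun ω => δ ω - τ ω|m] =ᵐ[μ] 0 := by
      have h : μ[fun ω => δ ω - τ ω|m] =ᵐ[μ] μ[δ|m] - μ[τ|m] :=
        condExp_sub (μ := μ) (m := m) (f := δ) (g := τ) hδi hτi
      refine h.trans ?_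
      rw [hτdef, condExp_of_stronglyMeasurable hm stronglyMeasurable_condExp integrable_condExp]
      filter_upwards with ω
      simp
    have hB0' : μ[fun ω => (2 * (τ ω - β)) * (δ ω - τ ω)|m]
        =ᵐ[μ] (fun ω => 2 * (τ ω - β)) * μ[fun ω => δ ω - τ ω|m] := by
      exact condExp_mul_of_stronglyMeasurable_left (μ := μ) (f := fun ω => 2 * (τ ω - β))
        (g := fun ω => δ ω - τ ω) hψm.stronglyMeasurable hBi hθi
    have hB0 : μ[fun ω => (2 * (τ ω - β)) * (δ ω - τ ω)|m] =ᵐ[μ] 0 := by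
      filter_upwards [hB0', hθ0] with ω h1 h2
      simp only [Pi.mul_apply] at h1
      simp only [Pi.zero_apply] at h2 ⊢
      rw [h1, h2, mul_zero]
    have hexp : (fun ω => (δ ω - β) ^ 2)
        = ((fun ω => (δ ω - τ ω) ^ 2) + (fun ω => (2 * (τ ω - β)) * (δ ω - τ ω))
          + fun ω => (τ ω - β) ^ 2) := by
      funext ω; simp only [Pi.add_apply]; ring
    have hsum1 := condExp_add (μ := μ) (m := m)
      (f := (fun ω => (δ ω - τ ω) ^ 2) + fun ω => (2 * (τ ω - β)) * (δ ω - τ ω))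
      (g := fun ω => (τ ω - β) ^ 2) (hd2.add hBi) hτβ2
    have hsum2 := condExp_add (μ := μ) (m := m)
      (f := fun ω => (δ ω - τ ω) ^ 2)
      (g := fun ω => (2 * (τ ω - β)) * (δ ω - τ ω)) hd2 hBi
    have hCc : μ[fun ω => (τ ω - β) ^ 2|m] = fun ω => (τ ω - β) ^ 2 :=
      condExp_of_stronglyMeasurable hm
        ((hτm.sub measurable_const).pow_const 2).stronglyMeasurable hτβ2
    simp only [hexp]
    filter_upwards [hsum1, hsum2, hB0, hvar] with ω h1 h2 h3 h4
    simp only [Pi.add_apply] at h1 h2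
    simp only [Pi.zero_apply] at h3
    rw [h1, h2, h3, hCc]
    have hb : ((fun ω => (τ ω - β) ^ 2) ω) = (τ ω - β) ^ 2 := rfl
    rw [hb]
    linarith [h4]
  -- main chain
  have int2 : Integrable (fun ω => φ ω * ((τ ω - β) ^ 2 + w ω)) μ := by
    refine Integrable.mono' ((hτβ2.add hwi).const_mul (2 * ε)⁻¹)
      (((hφm.mono hm le_rfl).aemeasurable.aestronglyMeasurable).mul
        (hτβ2.add hwi).1) ?_
    filter_upwards with ω
    have h0 : 0 ≤ (τ ω - β) ^ 2 + w ω := add_nonneg (sq_nonneg _) (hwnn ω)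
    rw [Real.norm_eq_abs, abs_of_nonneg (mul_nonneg (hφnn ω) h0)]
    exact mul_le_mul_of_nonneg_right (hφbd ω) h0
  have int1 : Integrable (φ * μ[fun ω' => (δ ω' - β) ^ 2|m]) μ := by
    refine Integrable.mono' ((integrable_condExp (m := m) (μ := μ)
        (f := fun ω' => (δ ω' - β) ^ 2)).norm.const_mul (2 * ε)⁻¹)
      (((hφm.mono hm le_rfl).aemeasurable.aestronglyMeasurable).mul
        (stronglyMeasurable_condExp.mono hm).aestronglyMeasurable) ?_
    filter_upwards with ω
    simp only [Pi.mul_apply]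
    rw [Real.norm_eq_abs, abs_mul, abs_of_nonneg (hφnn ω)]
    exact mul_le_mul_of_nonneg_right (hφbd ω) (abs_nonneg _)
  have step1 : ∫ ω, φ ω * (δ ω - β) ^ 2 ∂μ
      = ∫ ω, (φ * μ[fun ω' => (δ ω' - β) ^ 2|m]) ω ∂μ := by
    rw [← integral_congr_ae h_pull]
    exact (integral_condExp (f := φ * fun ω' => (δ ω' - β) ^ 2) hm).symm
  have step2 : ∫ ω, (φ * μ[fun ω' => (δ ω' - β) ^ 2|m]) ω ∂μ
      ≤ ∫ ω, φ ω * ((τ ω - β) ^ 2 + w ω) ∂μ := by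
    refine integral_mono_ae int1 int2 ?_
    filter_upwards [hC] with ω hω
    simp only [Pi.mul_apply]
    exact mul_le_mul_of_nonneg_left hω (hφnn ω)
  have step3 : ∫ ω, φ ω * ((τ ω - β) ^ 2 + w ω) ∂μ ≤ ∫ ω, s ω / 2 ∂μ := by
    refine integral_mono int2 (hsi.div_const 2) fun ω => ?_
    have hs := hs_pos ω
    have h1 : φ ω * g ω = s ω / 2 := by
      have h2 : φ ω = (2 * s ω)⁻¹ := rfl
      rw [h2, ← hs_sq ω]
      field_simp
    have h3 : (τ ω - β) ^ 2 + w ω ≤ g ω := by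
      have : g ω = (τ ω - β) ^ 2 + w ω + ε ^ 2 := rfl
      nlinarith
    calc φ ω * ((τ ω - β) ^ 2 + w ω) ≤ φ ω * g ω :=
          mul_le_mul_of_nonneg_left h3 (hφnn ω)
    _ = s ω / 2 := h1
  have stepA : ∫ ω, |δ ω - β| ∂μ ≤ ∫ ω, (s ω / 2 + φ ω * (δ ω - β) ^ 2) ∂μ :=
    integral_mono habs ((hsi.div_const 2).add h_int_fg) pointA
  have stepB : ∫ ω, (s ω / 2 + φ ω * (δ ω - β) ^ 2) ∂μ
      = ∫ ω, s ω / 2 ∂μ + ∫ ω, φ ω * (δ ω - β) ^ 2 ∂μ :=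
    integral_add (hsi.div_const 2) h_int_fg
  have stepC : ∫ ω, s ω ∂μ ≤ ∫ ω, Real.sqrt ((τ ω - β) ^ 2 + w ω) ∂μ + ε := by
    have e7 : ∀ ω, s ω ≤ Real.sqrt ((τ ω - β) ^ 2 + w ω) + ε := by
      intro ω
      have h0 : 0 ≤ (τ ω - β) ^ 2 + w ω := add_nonneg (sq_nonneg _) (hwnn ω)
      have h1 : g ω ≤ (Real.sqrt ((τ ω - β) ^ 2 + w ω) + ε) ^ 2 := by
        have h2 := Real.sq_sqrt h0
        have h3 := Real.sqrt_nonneg ((τ ω - β) ^ 2 + w ω)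
        have h4 : g ω = (τ ω - β) ^ 2 + w ω + ε ^ 2 := rfl
        nlinarith
      calc s ω ≤ Real.sqrt ((Real.sqrt ((τ ω - β) ^ 2 + w ω) + ε) ^ 2) :=
            Real.sqrt_le_sqrt h1
      _ = Real.sqrt ((τ ω - β) ^ 2 + w ω) + ε := Real.sqrt_sq (by positivity)
    calc ∫ ω, s ω ∂μ ≤ ∫ ω, (Real.sqrt ((τ ω - β) ^ 2 + w ω) + ε) ∂μ :=
          integral_mono hsi (hsq0i.add (integrable_const ε)) e7
    _ = ∫ ω, Real.sqrt ((τ ω - β) ^ 2 + w ω) ∂μ + ε := by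
        rw [integral_add hsq0i (integrable_const ε), integral_const]
        simp
  have hhalf : ∫ ω, s ω / 2 ∂μ + ∫ ω, s ω / 2 ∂μ = ∫ ω, s ω ∂μ := by
    rw [integral_div]
    ring
  calc ∫ ω, |δ ω - β| ∂μ
      ≤ ∫ ω, s ω / 2 ∂μ + ∫ ω, φ ω * (δ ω - β) ^ 2 ∂μ := stepA.trans (le_of_eq stepB)
  _ ≤ ∫ ω, s ω / 2 ∂μ + ∫ ω, s ω / 2 ∂μ := by
      have := (step1.trans_le step2).trans step3
      linarith
  _ = ∫ ω, s ω ∂μ := hhalf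
  _ ≤ ∫ ω, Real.sqrt ((τ ω - β) ^ 2 + w ω) ∂μ + ε := stepC

end Aux

/-- If `Var(δ | X) ≤ σ̄²(X)` a.s. where `τ(X) = E[δ | X]`, then for `α ∈ (0,1]`,
`CVaR_α(δ) ≥ sup_β (β + (2α)⁻¹ E[τ(X) − β − √((τ(X) − β)² + σ̄²(X))])`. -/

theorem cvar_lower_bound_variance {Ω 𝒳 : Type*} [MeasurableSpace Ω] {m𝒳 : MeasurableSpace 𝒳}
    (μ : Measure Ω) [IsProbabilityMeasure μ]
    (X : Ω → 𝒳) (hX : Measurable X)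
    (δ : Ω → ℝ) (hδ : MemLp δ 2 μ)
    (τX : Ω → ℝ) (hτX : τX = μ[δ | MeasurableSpace.comap X m𝒳])
    (σ2 : 𝒳 → ℝ) (hσ2m : Measurable σ2) (hσ2nn : ∀ x, 0 ≤ σ2 x)
    (hσ2i : Integrable (fun ω => σ2 (X ω)) μ)
    (hvar : ∀ᵐ ω ∂μ,
      (μ[fun ω' => (δ ω' - τX ω') ^ 2 | MeasurableSpace.comap X m𝒳]) ω ≤ σ2 (X ω))
    (α : ℝ) (hα : α ∈ Set.Ioc (0 : ℝ) 1) :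
    (⨆ β : ℝ, β + (2 * α)⁻¹ *
        ∫ ω, (τX ω - β - Real.sqrt ((τX ω - β) ^ 2 + σ2 (X ω))) ∂μ) ≤ cvar μ δ α := by
  obtain ⟨hα0, hα1⟩ := hα
  subst hτX
  have hm := hX.comap_le
  set m : MeasurableSpace Ω := MeasurableSpace.comap X m𝒳 with hmdef
  haveI : IsFiniteMeasure (μ.trim hm) := isFiniteMeasure_trim hm
  set τ : Ω → ℝ := μ[δ|m] with hτdef
  have hwm : Measurable[m] (fun ω => σ2 (X ω)) :=
    hσ2m.comp (measurable_iff_comap_le.mpr le_rfl)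
  have hδi : Integrable δ μ := hδ.integrable one_le_two
  have hτ2 : MemLp τ 2 μ := aux_condExp_memL2 hm μ hδ
  have hτi : Integrable τ μ := hτ2.integrable one_le_two
  have hδβ : ∀ β : ℝ, Integrable (fun ω => δ ω - β) μ :=
    fun β => hδi.sub (integrable_const β)
  have hτβ : ∀ β : ℝ, Integrable (fun ω => τ ω - β) μ :=
    fun β => hτi.sub (integrable_const β)
  have core : ∀ β : ℝ, ∫ ω, |δ ω - β| ∂μ
      ≤ ∫ ω, Real.sqrt ((τ ω - β) ^ 2 + σ2 (X ω)) ∂μ :=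
    aux_abs_le hm μ hδ hwm (fun ω => hσ2nn _) hσ2i hvar
  -- integrabilities
  have habs : ∀ β : ℝ, Integrable (fun ω => |δ ω - β|) μ :=
    fun β => (hδβ β).abs
  have hmin_eq : ∀ β : ℝ, (fun ω => min (δ ω - β) 0)
      = fun ω => (δ ω - β - |δ ω - β|) / 2 := by
    intro β; funext ω
    rcases le_or_gt (δ ω - β) 0 with h | h
    · rw [min_eq_left h, abs_of_nonpos h]; ring
    · rw [min_eq_right h.le, abs_of_pos h]; ring
  have hmin : ∀ β : ℝ, Integrable (fun ω => min (δ ω - β) 0) μ := by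
    intro β
    rw [hmin_eq β]
    exact (((hδβ β).sub (habs β)).div_const 2)
  have hτβ2 : ∀ β : ℝ, Integrable (fun ω => (τ ω - β) ^ 2) μ :=
    fun β => (hτ2.sub (memLp_const β)).integrable_sq
  have hsqi : ∀ β : ℝ, Integrable (fun ω => Real.sqrt ((τ ω - β) ^ 2 + σ2 (X ω))) μ := by
    intro β
    have hb : Integrable (fun ω => 1 + ((τ ω - β) ^ 2 + σ2 (X ω))) μ :=
      (integrable_const (1:ℝ)).add ((hτβ2 β).add hσ2i)
    have hmeas := Measurable.aestronglyMeasurable (μ := μ)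
      (((((stronglyMeasurable_condExp (μ := μ) (f := δ)).mono hm).measurable.sub
        (measurable_const (a := β))).pow_const 2).add (hσ2m.comp hX)).sqrt
    refine Integrable.mono' hb hmeas ?_
    filter_upwards with ω
    rw [Real.norm_eq_abs, abs_of_nonneg (Real.sqrt_nonneg _)]
    have h1 : 0 ≤ (τ ω - β) ^ 2 + σ2 (X ω) := add_nonneg (sq_nonneg _) (hσ2nn _)
    nlinarith [Real.sq_sqrt h1, Real.sqrt_nonneg ((τ ω - β) ^ 2 + σ2 (X ω))]
  have hτδ : ∫ ω, τ ω ∂μ = ∫ ω, δ ω ∂μ := integral_condExp hm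
  -- min integral identity
  have hmin_int : ∀ β : ℝ, ∫ ω, min (δ ω - β) 0 ∂μ
      = (∫ ω, δ ω ∂μ - β - ∫ ω, |δ ω - β| ∂μ) / 2 := by
    intro β
    rw [hmin_eq β]
    rw [integral_div, integral_sub (hδβ β) (habs β),
      integral_sub hδi (integrable_const β), integral_const]
    simp
  -- bounded above of CVaR family
  have hbdd : BddAbove (Set.range fun β : ℝ => β + α⁻¹ * ∫ ω, min (δ ω - β) 0 ∂μ) := by
    refine ⟨max 0 (∫ ω, δ ω ∂μ), ?_⟩
    rintro x ⟨β, rfl⟩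
    have hminle : ∫ ω, min (δ ω - β) 0 ∂μ ≤ 0 :=
      integral_nonpos fun ω => min_le_right _ _
    have hαinv : (1:ℝ) ≤ α⁻¹ := by
      rw [le_inv_comm₀ one_pos hα0]; simpa using hα1
    have h2 : α⁻¹ * ∫ ω, min (δ ω - β) 0 ∂μ ≤ ∫ ω, min (δ ω - β) 0 ∂μ := by
      nlinarith
    rcases le_or_gt β 0 with hβ | hβ
    · have : α⁻¹ * ∫ ω, min (δ ω - β) 0 ∂μ ≤ 0 :=
        mul_nonpos_of_nonneg_of_nonpos (by positivity) hminle
      exact le_max_of_le_left (by linarith)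
    · have h3 : ∫ ω, min (δ ω - β) 0 ∂μ ≤ ∫ ω, δ ω ∂μ - β := by
        have h4 : ∫ ω, min (δ ω - β) 0 ∂μ ≤ ∫ ω, (δ ω - β) ∂μ :=
          integral_mono (hmin β) (hδβ β) fun ω => min_le_left _ _
        rw [integral_sub hδi (integrable_const β), integral_const] at h4
        simpa using h4
      exact le_max_of_le_right (by linarith)
  refine ciSup_le fun β => ?_
  refine le_trans ?_ (le_ciSup hbdd β)
  -- pointwise in β comparison
  have hLHS : ∫ ω, (τ ω - β - Real.sqrt ((τ ω - β) ^ 2 + σ2 (X ω))) ∂μ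
      = ∫ ω, δ ω ∂μ - β - ∫ ω, Real.sqrt ((τ ω - β) ^ 2 + σ2 (X ω)) ∂μ := by
    rw [integral_sub (hτβ β) (hsqi β),
      integral_sub hτi (integrable_const β), integral_const, hτδ]
    simp
  rw [hLHS, hmin_int β]
  have h2α : (0:ℝ) < (2 * α)⁻¹ := by positivity
  have hkey : ∫ ω, δ ω ∂μ - β - ∫ ω, Real.sqrt ((τ ω - β) ^ 2 + σ2 (X ω)) ∂μ
      ≤ ∫ ω, δ ω ∂μ - β - ∫ ω, |δ ω - β| ∂μ := by
    have := core β; linarith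
  have heq : α⁻¹ * ((∫ ω, δ ω ∂μ - β - ∫ ω, |δ ω - β| ∂μ) / 2)
      = (2 * α)⁻¹ * (∫ ω, δ ω ∂μ - β - ∫ ω, |δ ω - β| ∂μ) := by
    rw [mul_inv]
    ring
  rw [heq]
  have := mul_le_mul_of_nonneg_left hkey h2α.le
  linarith
end

section
/- Let δ be a square-integrable real random variable, X a random element of a measurable space, and τ(X) = E[δ | X]. Then for every α ∈ (0,1], 0 ≤ CVaR_α(τ(X)) − CVaR_α(δ) ≤ (1/(2α)) E[ sqrt(Var(δ | X)) ]. -/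
open MeasureTheory

section Aux

variable {Ω : Type*} {m m0 : MeasurableSpace Ω} {μ : Measure Ω}

private lemma min_zero_eq (x : ℝ) : min x 0 = (x - |x|) / 2 := by
  rcases le_total x 0 with h | h
  · rw [min_eq_left h, abs_of_nonpos h]; ring
  · rw [min_eq_right h, abs_of_nonneg h]; ring

private lemma integrable_min_zero {g : Ω → ℝ} (hg : Integrable g μ) :
    Integrable (fun ω => min (g ω) 0) μ := by
  have h : (fun ω => min (g ω) 0) = fun ω => (g ω - |g ω|) / 2 :=
    funext fun ω => min_zero_eq _
  rw [h]
  exact (hg.sub hg.abs).div_const 2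

private lemma sqrt_le_one_add_abs (x : ℝ) : Real.sqrt x ≤ 1 + |x| := by
  rcases le_total x 1 with h | h
  · calc Real.sqrt x ≤ Real.sqrt 1 := Real.sqrt_le_sqrt h
    _ = 1 := Real.sqrt_one
    _ ≤ 1 + |x| := le_add_of_nonneg_right (abs_nonneg x)
  · have h0 : (0:ℝ) ≤ x := le_trans zero_le_one h
    calc Real.sqrt x ≤ x := by
          nlinarith [Real.sq_sqrt h0, Real.sqrt_nonneg x]
    _ ≤ 1 + |x| := by cases abs_cases x <;> linarith
  
/-- `L²` contraction property of the conditional expectation. -/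
private lemma memLp_two_condexp (hm : m ≤ m0) (μ : Measure Ω) [IsProbabilityMeasure μ]
    {f : Ω → ℝ} (hf : MemLp f 2 μ) : MemLp (μ[f|m]) 2 μ := by
  haveI : SigmaFinite (μ.trim hm) := inferInstance
  set fL : Lp ℝ 2 μ := hf.toLp f with hfLdef
  have hfL : fL =ᵐ[μ] f := hf.coeFn_toLp
  have hgm : AEStronglyMeasurable[m] ((condExpL2 ℝ ℝ hm fL : Lp ℝ 2 μ) : Ω → ℝ) μ :=
    aestronglyMeasurable_condExpL2 hm fL
  have hae : ((condExpL2 ℝ ℝ hm fL : Lp ℝ 2 μ) : Ω → ℝ) =ᵐ[μ] μ[f|m] := by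
    refine ae_eq_condExp_of_forall_setIntegral_eq hm (hf.integrable one_le_two)
      (fun s _ hμs => integrableOn_condExpL2_of_measure_ne_top hm hμs.ne fL)
      (fun s hs hμs => ?_) hgm
    rw [integral_condExpL2_eq hm fL hs hμs.ne]
    exact setIntegral_congr_ae (hm s hs) (hfL.mono fun x hx _ => hx)
  exact (Lp.memLp _).ae_eq hae

/-- Conditional Cauchy-Schwarz in integrated form:
`E |Y| ≤ E sqrt (E[Y^2 | m])`. -/
private lemma integral_abs_le_integral_sqrt_condexp (hm : m ≤ m0) (μ : Measure Ω)
    [IsProbabilityMeasure μ] {Y : Ω → ℝ} (hY : MemLp Y 2 μ) :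
    ∫ ω, |Y ω| ∂μ ≤ ∫ ω, Real.sqrt ((μ[(fun ω => Y ω ^ 2)|m]) ω) ∂μ := by
  haveI : SigmaFinite (μ.trim hm) := inferInstance
  set V : Ω → ℝ := μ[(fun ω => Y ω ^ 2)|m] with hVdef
  have hVint : Integrable V μ := integrable_condExp
  have hVnn : 0 ≤ᵐ[μ] V :=
    condExp_nonneg (Filter.Eventually.of_forall fun ω => sq_nonneg _)
  have hYi : Integrable Y μ := hY.integrable one_le_two
  have hY2 : Integrable (fun ω => Y ω ^ 2) μ := hY.integrable_sq
  have hVm : StronglyMeasurable[m] V := stronglyMeasurable_condExp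
  have hsV_int : Integrable (fun ω => Real.sqrt (V ω)) μ := by
    refine Integrable.mono' ((integrable_const (1:ℝ)).add hVint.abs)
      ((hVm.mono hm).measurable.sqrt.aestronglyMeasurable) ?_
    refine Filter.Eventually.of_forall fun ω => ?_
    rw [Real.norm_eq_abs, abs_of_nonneg (Real.sqrt_nonneg _)]
    exact sqrt_le_one_add_abs _
  refine le_of_forall_pos_le_add fun ε hε => ?_
  set w : Ω → ℝ := fun ω => Real.sqrt (V ω + ε ^ 2) with hwdef
  set u : Ω → ℝ := fun ω => (w ω)⁻¹ with hudef
  have hwm : Measurable[m] w := (hVm.measurable.add_const _).sqrt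
  have hum : StronglyMeasurable[m] u := (hwm.inv).stronglyMeasurable
  have hw_facts : ∀ᵐ ω ∂μ, 0 ≤ V ω ∧ ε ≤ w ω ∧ w ω ^ 2 = V ω + ε ^ 2 := by
    filter_upwards [hVnn] with ω hVω
    have hVω' : (0:ℝ) ≤ V ω := hVω
    refine ⟨hVω', ?_, Real.sq_sqrt (by positivity)⟩
    calc ε = Real.sqrt (ε ^ 2) := (Real.sqrt_sq hε.le).symm
    _ ≤ w ω := Real.sqrt_le_sqrt (by linarith)
  have hu_bound : ∀ᵐ ω ∂μ, ‖u ω‖ ≤ ε⁻¹ := by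
    filter_upwards [hw_facts] with ω ⟨h1, h2, h3⟩
    have hwpos : 0 < w ω := lt_of_lt_of_le hε h2
    rw [Real.norm_eq_abs, abs_of_nonneg (inv_nonneg.2 hwpos.le)]
    exact inv_anti₀ hε h2
  have huY2 : Integrable (fun ω => u ω * Y ω ^ 2) μ :=
    hY2.bdd_mul ((hum.mono hm).aestronglyMeasurable) hu_bound
  have huV : Integrable (fun ω => u ω * V ω) μ :=
    hVint.bdd_mul ((hum.mono hm).aestronglyMeasurable) hu_bound
  have hw_int : Integrable w μ := by
    refine Integrable.mono' ((integrable_const (1 + ε ^ 2 : ℝ)).add hVint.abs)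
      (((hVm.mono hm).measurable.add_const _).sqrt.aestronglyMeasurable) ?_
    refine Filter.Eventually.of_forall fun ω => ?_
    rw [Real.norm_eq_abs, abs_of_nonneg (Real.sqrt_nonneg _)]
    calc Real.sqrt (V ω + ε ^ 2) ≤ 1 + |V ω + ε ^ 2| := sqrt_le_one_add_abs _
    _ ≤ 1 + (|V ω| + ε ^ 2) := by
        have := abs_add_le (V ω) (ε ^ 2)
        rw [abs_of_nonneg (by positivity : (0:ℝ) ≤ ε ^ 2)] at this
        linarith
    _ = 1 + ε ^ 2 + |V ω| := by ring
  have hpull : ∫ ω, u ω * Y ω ^ 2 ∂μ = ∫ ω, u ω * V ω ∂μ := by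
    rw [← integral_condExp (f := fun ω => u ω * Y ω ^ 2) hm]
    refine integral_congr_ae ?_
    have := condExp_stronglyMeasurable_mul_of_bound hm hum hY2 ε⁻¹ hu_bound
    filter_upwards [this] with ω hω
    exact hω
  have step1 : ∫ ω, |Y ω| ∂μ ≤ ∫ ω, (w ω + u ω * Y ω ^ 2) / 2 ∂μ := by
    refine integral_mono_ae hYi.abs ((hw_int.add huY2).div_const 2) ?_
    filter_upwards [hw_facts] with ω ⟨h1, h2, h3⟩
    have hwpos : 0 < w ω := lt_of_lt_of_le hε h2
    have huw : u ω * w ω = 1 := inv_mul_cancel₀ hwpos.ne'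
    have hunn : 0 ≤ u ω := inv_nonneg.2 hwpos.le
    have hsq : 0 ≤ u ω * (w ω - |Y ω|) ^ 2 := mul_nonneg hunn (sq_nonneg _)
    have habs : |Y ω| ^ 2 = Y ω ^ 2 := sq_abs _
    nlinarith [hsq, huw, habs]
  have step2 : ∫ ω, (w ω + u ω * Y ω ^ 2) / 2 ∂μ ≤ ∫ ω, w ω ∂μ := by
    rw [integral_div, integral_add hw_int huY2, hpull]
    have : ∫ ω, u ω * V ω ∂μ ≤ ∫ ω, w ω ∂μ := by
      refine integral_mono_ae huV hw_int ?_
      filter_upwards [hw_facts] with ω ⟨h1, h2, h3⟩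
      have hwpos : 0 < w ω := lt_of_lt_of_le hε h2
      have huw : u ω * w ω = 1 := inv_mul_cancel₀ hwpos.ne'
      have hunn : 0 ≤ u ω := inv_nonneg.2 hwpos.le
      nlinarith [huw, hunn, h1, h3]
    linarith
  have step3 : ∫ ω, w ω ∂μ ≤ (∫ ω, Real.sqrt (V ω) ∂μ) + ε := by
    have : ∫ ω, w ω ∂μ ≤ ∫ ω, (Real.sqrt (V ω) + ε) ∂μ := by
      refine integral_mono_ae hw_int (hsV_int.add (integrable_const ε)) ?_
      filter_upwards [hw_facts] with ω ⟨h1, h2, h3⟩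
      have : V ω + ε ^ 2 ≤ (Real.sqrt (V ω) + ε) ^ 2 := by
        nlinarith [Real.sq_sqrt h1, Real.sqrt_nonneg (V ω)]
      calc w ω ≤ Real.sqrt ((Real.sqrt (V ω) + ε) ^ 2) := Real.sqrt_le_sqrt this
      _ = Real.sqrt (V ω) + ε := Real.sqrt_sq (by positivity)
    rwa [integral_add hsV_int (integrable_const ε), integral_const, probReal_univ,
      one_smul] at this
  linarith

/-- Each term in the supremum defining CVaR is bounded by the mean. -/
private lemma cvar_term_le (μ : Measure Ω) [IsProbabilityMeasure μ] {Z : Ω → ℝ}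
    (hZ : Integrable Z μ) {α : ℝ} (hα : α ∈ Set.Ioc (0 : ℝ) 1) (β : ℝ) :
    β + α⁻¹ * ∫ ω, min (Z ω - β) 0 ∂μ ≤ ∫ ω, Z ω ∂μ := by
  obtain ⟨hα0, hα1⟩ := hα
  have hZβ : Integrable (fun ω => Z ω - β) μ := hZ.sub (integrable_const β)
  have hmin : Integrable (fun ω => min (Z ω - β) 0) μ := integrable_min_zero hZβ
  have hα1' : 1 ≤ α⁻¹ := by
    rw [show α⁻¹ = 1 / α from (one_div α).symm, le_div_iff₀ hα0]; linarith
  have hI0 : ∫ ω, min (Z ω - β) 0 ∂μ ≤ 0 := by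
    refine integral_nonpos fun ω => min_le_right _ _
  have hIle : ∫ ω, min (Z ω - β) 0 ∂μ ≤ (∫ ω, Z ω ∂μ) - β := by
    have h1 : ∫ ω, min (Z ω - β) 0 ∂μ ≤ ∫ ω, (Z ω - β) ∂μ :=
      integral_mono hmin hZβ fun ω => min_le_left _ _
    rwa [integral_sub hZ (integrable_const β), integral_const, probReal_univ,
      one_smul] at h1
  rcases le_or_gt β (∫ ω, Z ω ∂μ) with h | h
  · have : α⁻¹ * ∫ ω, min (Z ω - β) 0 ∂μ ≤ 0 :=
      mul_nonpos_of_nonneg_of_nonpos (by positivity) hI0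
    linarith
  · have : α⁻¹ * ∫ ω, min (Z ω - β) 0 ∂μ ≤ 1 * ∫ ω, min (Z ω - β) 0 ∂μ :=
      mul_le_mul_of_nonpos_right hα1' hI0
    nlinarith

end Aux

/-- With `τ(X) = E[δ | X]`, for every `α ∈ (0,1]`,
`0 ≤ CVaR_α(τ(X)) − CVaR_α(δ) ≤ (2α)⁻¹ E[√(Var(δ | X))]`. -/
theorem cvar_gap_variance_bound {Ω 𝒳 : Type*} [MeasurableSpace Ω] {m𝒳 : MeasurableSpace 𝒳}
    (μ : Measure Ω) [IsProbabilityMeasure μ]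
    (X : Ω → 𝒳) (hX : Measurable X)
    (δ : Ω → ℝ) (hδ : MemLp δ 2 μ)
    (τX : Ω → ℝ) (hτX : τX = μ[δ | MeasurableSpace.comap X m𝒳])
    (Vδ : Ω → ℝ) (hVδ : Vδ = μ[fun ω => (δ ω - τX ω) ^ 2 | MeasurableSpace.comap X m𝒳])
    (α : ℝ) (hα : α ∈ Set.Ioc (0 : ℝ) 1) :
    0 ≤ cvar μ τX α - cvar μ δ α ∧
    cvar μ τX α - cvar μ δ α ≤ (2 * α)⁻¹ * ∫ ω, Real.sqrt (Vδ ω) ∂μ := by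
  have hm : MeasurableSpace.comap X m𝒳 ≤ _ := hX.comap_le
  set m : MeasurableSpace Ω := MeasurableSpace.comap X m𝒳 with hmdef
  haveI : SigmaFinite (μ.trim hm) := inferInstance
  obtain ⟨hα0, hα1⟩ := hα
  have hδi : Integrable δ μ := hδ.integrable one_le_two
  have hτ2 : MemLp τX 2 μ := by rw [hτX]; exact memLp_two_condexp hm μ hδ
  have hτi : Integrable τX μ := hτ2.integrable one_le_two
  have hY2 : MemLp (fun ω => δ ω - τX ω) 2 μ := hδ.sub hτ2
  -- the key conditional Cauchy-Schwarz bound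
  have hkey : ∫ ω, |δ ω - τX ω| ∂μ ≤ ∫ ω, Real.sqrt (Vδ ω) ∂μ := by
    rw [hVδ]
    exact integral_abs_le_integral_sqrt_condexp hm μ hY2
  have hEτδ : ∫ ω, τX ω ∂μ = ∫ ω, δ ω ∂μ := by rw [hτX]; exact integral_condExp hm
  -- per-β analysis
  have hmin_eq : ∀ (Z : Ω → ℝ), Integrable Z μ → ∀ β : ℝ,
      ∫ ω, min (Z ω - β) 0 ∂μ = ((∫ ω, Z ω ∂μ) - β - ∫ ω, |Z ω - β| ∂μ) / 2 := by
    intro Z hZ β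
    have hZβ : Integrable (fun ω => Z ω - β) μ := hZ.sub (integrable_const β)
    have h1 : ∀ ω, min (Z ω - β) 0 = ((Z ω - β) - |Z ω - β|) / 2 :=
      fun ω => min_zero_eq _
    simp only [h1]
    rw [integral_div, integral_sub hZβ hZβ.abs,
      integral_sub hZ (integrable_const β), integral_const, probReal_univ,
      one_smul]
  have habs1 : ∀ β : ℝ, ∫ ω, |τX ω - β| ∂μ ≤ ∫ ω, |δ ω - β| ∂μ := by
    intro β
    have h2 : μ[δ - (fun _ => β)|m] =ᵐ[μ] μ[δ|m] - μ[(fun _ => β)|m] :=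
      condExp_sub hδi (integrable_const β) m
    have h1 : μ[δ - (fun _ => β)|m] =ᵐ[μ] fun ω => τX ω - β := by
      rw [hτX]
      filter_upwards [h2] with ω hω
      rw [hω, Pi.sub_apply, condExp_const hm β]
    calc ∫ ω, |τX ω - β| ∂μ = ∫ ω, |(μ[δ - (fun _ => β)|m]) ω| ∂μ := by
          refine integral_congr_ae ?_
          filter_upwards [h1] with ω hω
          rw [hω]
    _ ≤ ∫ ω, |(δ - fun _ => β : Ω → ℝ) ω| ∂μ := integral_abs_condExp_le _
    _ = ∫ ω, |δ ω - β| ∂μ := rfl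
  have habs2 : ∀ β : ℝ, ∫ ω, |δ ω - β| ∂μ - ∫ ω, |τX ω - β| ∂μ ≤ ∫ ω, |δ ω - τX ω| ∂μ := by
    intro β
    have hδβ : Integrable (fun ω => |δ ω - β|) μ := (hδi.sub (integrable_const β)).abs
    have hτβ : Integrable (fun ω => |τX ω - β|) μ := (hτi.sub (integrable_const β)).abs
    rw [← integral_sub hδβ hτβ]
    refine integral_mono (hδβ.sub hτβ) (hδi.sub hτi).abs fun ω => ?_
    have := abs_sub_abs_le_abs_sub (δ ω - β) (τX ω - β)
    simpa using this
  -- boundedness of the families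
  have hbddδ : BddAbove (Set.range fun β : ℝ => β + α⁻¹ * ∫ ω, min (δ ω - β) 0 ∂μ) := by
    refine ⟨∫ ω, δ ω ∂μ, fun x ⟨β, hβ⟩ => ?_⟩
    rw [← hβ]; exact cvar_term_le μ hδi ⟨hα0, hα1⟩ β
  have hbddτ : BddAbove (Set.range fun β : ℝ => β + α⁻¹ * ∫ ω, min (τX ω - β) 0 ∂μ) := by
    refine ⟨∫ ω, τX ω ∂μ, fun x ⟨β, hβ⟩ => ?_⟩
    rw [← hβ]; exact cvar_term_le μ hτi ⟨hα0, hα1⟩ β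
  have hlow : ∀ β : ℝ, ∫ ω, min (δ ω - β) 0 ∂μ ≤ ∫ ω, min (τX ω - β) 0 ∂μ := by
    intro β
    rw [hmin_eq δ hδi β, hmin_eq τX hτi β, hEτδ]
    have := habs1 β
    linarith
  have hup : ∀ β : ℝ, ∫ ω, min (τX ω - β) 0 ∂μ - ∫ ω, min (δ ω - β) 0 ∂μ ≤
      (∫ ω, Real.sqrt (Vδ ω) ∂μ) / 2 := by
    intro β
    rw [hmin_eq δ hδi β, hmin_eq τX hτi β, hEτδ]
    have h2 := habs2 β
    linarith
  constructor
  · rw [sub_nonneg]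
    unfold cvar
    refine ciSup_mono hbddτ fun β => ?_
    have := hlow β
    have h2 : α⁻¹ * ∫ ω, min (δ ω - β) 0 ∂μ ≤ α⁻¹ * ∫ ω, min (τX ω - β) 0 ∂μ :=
      mul_le_mul_of_nonneg_left this (by positivity)
    linarith
  · rw [sub_le_iff_le_add]
    unfold cvar
    refine ciSup_le fun β => ?_
    have h1 : β + α⁻¹ * ∫ ω, min (δ ω - β) 0 ∂μ ≤
        ⨆ β : ℝ, β + α⁻¹ * ∫ ω, min (δ ω - β) 0 ∂μ := le_ciSup hbddδ β
    have h2 := hup β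
    have h3 : α⁻¹ * (∫ ω, min (τX ω - β) 0 ∂μ - ∫ ω, min (δ ω - β) 0 ∂μ) ≤
        α⁻¹ * ((∫ ω, Real.sqrt (Vδ ω) ∂μ) / 2) :=
      mul_le_mul_of_nonneg_left h2 (by positivity)
    have h4 : α⁻¹ * ((∫ ω, Real.sqrt (Vδ ω) ∂μ) / 2) =
        (2 * α)⁻¹ * ∫ ω, Real.sqrt (Vδ ω) ∂μ := by
      rw [mul_inv]; ring
    rw [mul_sub] at h3
    linarith
end

section
/- Let δ be a square-integrable real random variable, X a random element of a measurable space, τ(X) = E[δ | X], and τ̃ : 𝒳 → ℝ a measurable function with τ̃(X) integrable. Fix α ∈ (0,1), let β̃ = F_{τ̃(X)}^{-1}(α), and assume P(τ̃(X) ≤ β̃) = α. Then CVaR_α(τ(X)) ≤ β̃ + (1/α) E[ 1{τ̃(X) ≤ β̃} (τ(X) − β̃) ]. -/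
open MeasureTheory

/-- The `p`-quantile of `Z` under `μ`: `F_Z⁻¹(p) = inf {β : P(Z ≤ β) ≥ p}`. -/
noncomputable def quantile {Ω : Type*} [MeasurableSpace Ω] (μ : Measure Ω) (Z : Ω → ℝ)
    (p : ℝ) : ℝ :=
  sInf {β : ℝ | p ≤ (μ {ω | Z ω ≤ β}).toReal}

/-- For any measurable `τ̃` with integrable `τ̃(X)`, `α ∈ (0,1)`,
`β̃ = F_{τ̃(X)}⁻¹(α)`, and `P(τ̃(X) ≤ β̃) = α`, with `τ(X) = E[δ | X]`:
`CVaR_α(τ(X)) ≤ β̃ + α⁻¹ E[1{τ̃(X) ≤ β̃}(τ(X) − β̃)]`. -/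
theorem cvar_double_validity {Ω 𝒳 : Type*} [MeasurableSpace Ω] {m𝒳 : MeasurableSpace 𝒳}
    (μ : Measure Ω) [IsProbabilityMeasure μ]
    (X : Ω → 𝒳) (hX : Measurable X)
    (δ : Ω → ℝ) (hδ : MemLp δ 2 μ)
    (τX : Ω → ℝ) (hτX : τX = μ[δ | MeasurableSpace.comap X m𝒳])
    (τ' : 𝒳 → ℝ) (hτ'm : Measurable τ') (hτ'i : Integrable (fun ω => τ' (X ω)) μ)
    (α : ℝ) (hα : α ∈ Set.Ioo (0 : ℝ) 1)
    (β' : ℝ) (hβ' : β' = quantile μ (fun ω => τ' (X ω)) α)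
    (hq : (μ {ω | τ' (X ω) ≤ β'}).toReal = α) :
    cvar μ τX α ≤
      β' + α⁻¹ * ∫ ω, Set.indicator {ω | τ' (X ω) ≤ β'} (fun ω => τX ω - β') ω ∂μ := by
  obtain ⟨hα0, hα1⟩ := hα
  have hτint : Integrable τX μ := hτX ▸ integrable_condExp
  set A : Set Ω := {ω | τ' (X ω) ≤ β'} with hA
  have hAm : MeasurableSet A := measurableSet_le (hτ'm.comp hX) measurable_const
  rw [cvar]
  apply ciSup_le
  intro β
  have hint1 : Integrable (fun ω => τX ω - β) μ := hτint.sub (integrable_const β)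
  have hint1' : Integrable (fun ω => τX ω - β') μ := hτint.sub (integrable_const β')
  have hmin : Integrable (fun ω => min (τX ω - β) 0) μ :=
    hint1.inf (integrable_const 0)
  have hind : Integrable (fun ω => A.indicator (fun ω => τX ω - β) ω) μ :=
    hint1.indicator hAm
  have hind' : Integrable (fun ω => A.indicator (fun ω => τX ω - β') ω) μ :=
    hint1'.indicator hAm
  have hptwise : ∀ ω, min (τX ω - β) 0 ≤ A.indicator (fun ω => τX ω - β) ω := by
    intro ω
    by_cases h : ω ∈ A
    · rw [Set.indicator_of_mem h]; exact min_le_left _ _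
    · rw [Set.indicator_of_notMem h]; exact min_le_right _ _
  have hImono : ∫ ω, min (τX ω - β) 0 ∂μ ≤ ∫ ω, A.indicator (fun ω => τX ω - β) ω ∂μ :=
    integral_mono hmin hind hptwise
  -- decomposition of the indicator integral
  have hdecomp : ∫ ω, A.indicator (fun ω => τX ω - β') ω ∂μ
      = (∫ ω, A.indicator (fun ω => τX ω - β) ω ∂μ) + (β - β') * α := by
    have heq : (fun ω => A.indicator (fun ω => τX ω - β') ω)
        = fun ω => A.indicator (fun ω => τX ω - β) ω + A.indicator (fun _ => β - β') ω := by
      funext ω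
      by_cases h : ω ∈ A
      · simp [Set.indicator_of_mem h]
      · simp [Set.indicator_of_notMem h]
    rw [heq, integral_add hind ((integrable_const (β - β')).indicator hAm),
      integral_indicator_const _ hAm]
    simp [measureReal_def, hq]; ring
  have hαinv : (0:ℝ) < α⁻¹ := inv_pos.mpr hα0
  calc β + α⁻¹ * ∫ ω, min (τX ω - β) 0 ∂μ
      ≤ β + α⁻¹ * ∫ ω, A.indicator (fun ω => τX ω - β) ω ∂μ := by
        gcongr
    _ = β' + α⁻¹ * ∫ ω, A.indicator (fun ω => τX ω - β') ω ∂μ := by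
        rw [hdecomp]
        field_simp
        ring
end

section
/- Let δ be a square-integrable real random variable, X a random element of a measurable space, τ(X) = E[δ | X], and τ̄ = E[δ]. Then for all 0 < α₁ ≤ α₂ ≤ α₃ ≤ 1, CVaR_{α₁}(δ) ≤ CVaR_{α₂}(δ) ≤ CVaR_{α₂}(τ(X)) ≤ CVaR_{α₃}(τ(X)) ≤ τ̄. -/
open MeasureTheory

lemma min_integrable {Ω : Type*} [MeasurableSpace Ω] {μ : Measure Ω} [IsProbabilityMeasure μ]
    {Z : Ω → ℝ} (hZ : Integrable Z μ) (β : ℝ) :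
    Integrable (fun ω => min (Z ω - β) 0) μ := by
  have h1 : Integrable (fun ω => Z ω - β) μ := hZ.sub (integrable_const β)
  refine h1.mono (h1.aestronglyMeasurable.inf aestronglyMeasurable_const) ?_
  filter_upwards with ω
  simp only [Real.norm_eq_abs]
  rcases le_or_gt (Z ω - β) 0 with h | h
  · rw [min_eq_left h]
  · rw [min_eq_right h.le]; simp [abs_nonneg]

lemma term_le {Ω : Type*} [MeasurableSpace Ω] {μ : Measure Ω} [IsProbabilityMeasure μ]
    {Z : Ω → ℝ} (hZ : Integrable Z μ) {α : ℝ} (hα : 0 < α) (hα1 : α ≤ 1) (β : ℝ) :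
    β + α⁻¹ * ∫ ω, min (Z ω - β) 0 ∂μ ≤ ∫ ω, Z ω ∂μ := by
  have hI : ∫ ω, min (Z ω - β) 0 ∂μ ≤ 0 := integral_nonpos (fun ω => min_le_right _ _)
  have h1 : (1 : ℝ) ≤ α⁻¹ := (one_le_inv₀ hα).2 hα1
  have h2 : α⁻¹ * ∫ ω, min (Z ω - β) 0 ∂μ ≤ 1 * ∫ ω, min (Z ω - β) 0 ∂μ :=
    mul_le_mul_of_nonpos_right h1 hI
  have h3 : ∫ ω, min (Z ω - β) 0 ∂μ ≤ ∫ ω, (Z ω - β) ∂μ :=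
    integral_mono (min_integrable hZ β) (hZ.sub (integrable_const β))
      (fun ω => min_le_left _ _)
  have h4 : ∫ ω, (Z ω - β) ∂μ = (∫ ω, Z ω ∂μ) - β := by
    rw [integral_sub hZ (integrable_const β), integral_const]
    simp
  nlinarith

lemma cvar_bdd {Ω : Type*} [MeasurableSpace Ω] {μ : Measure Ω} [IsProbabilityMeasure μ]
    {Z : Ω → ℝ} (hZ : Integrable Z μ) {α : ℝ} (hα : 0 < α) (hα1 : α ≤ 1) :
    BddAbove (Set.range fun β : ℝ => β + α⁻¹ * ∫ ω, min (Z ω - β) 0 ∂μ) :=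
  ⟨∫ ω, Z ω ∂μ, Set.forall_mem_range.2 fun β => term_le hZ hα hα1 β⟩

lemma cvar_le_mean {Ω : Type*} [MeasurableSpace Ω] {μ : Measure Ω} [IsProbabilityMeasure μ]
    {Z : Ω → ℝ} (hZ : Integrable Z μ) {α : ℝ} (hα : 0 < α) (hα1 : α ≤ 1) :
    cvar μ Z α ≤ ∫ ω, Z ω ∂μ :=
  ciSup_le fun β => term_le hZ hα hα1 β

lemma cvar_mono_alpha {Ω : Type*} [MeasurableSpace Ω] {μ : Measure Ω} [IsProbabilityMeasure μ]
    {Z : Ω → ℝ} (hZ : Integrable Z μ) {α₁ α₂ : ℝ} (hα : 0 < α₁) (h12 : α₁ ≤ α₂) (h1 : α₂ ≤ 1) :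
    cvar μ Z α₁ ≤ cvar μ Z α₂ := by
  refine ciSup_mono (cvar_bdd hZ (hα.trans_le h12) h1) fun β => ?_
  have hI : ∫ ω, min (Z ω - β) 0 ∂μ ≤ 0 := integral_nonpos (fun ω => min_le_right _ _)
  have h : α₂⁻¹ ≤ α₁⁻¹ := inv_anti₀ hα h12
  nlinarith [mul_le_mul_of_nonpos_right h hI]

/-- With `τ(X) = E[δ | X]` and `τ̄ = E[δ]`, for all `0 < α₁ ≤ α₂ ≤ α₃ ≤ 1`:
`CVaR_{α₁}(δ) ≤ CVaR_{α₂}(δ) ≤ CVaR_{α₂}(τ(X)) ≤ CVaR_{α₃}(τ(X)) ≤ τ̄`. -/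
theorem cvar_ordering {Ω 𝒳 : Type*} [MeasurableSpace Ω] {m𝒳 : MeasurableSpace 𝒳}
    (μ : Measure Ω) [IsProbabilityMeasure μ]
    (X : Ω → 𝒳) (hX : Measurable X)
    (δ : Ω → ℝ) (hδ : MemLp δ 2 μ)
    (τX : Ω → ℝ) (hτX : τX = μ[δ | MeasurableSpace.comap X m𝒳])
    (τbar : ℝ) (hτbar : τbar = ∫ ω, δ ω ∂μ)
    (α₁ α₂ α₃ : ℝ) (h1 : 0 < α₁) (h12 : α₁ ≤ α₂) (h23 : α₂ ≤ α₃) (h3 : α₃ ≤ 1) :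
    cvar μ δ α₁ ≤ cvar μ δ α₂ ∧ cvar μ δ α₂ ≤ cvar μ τX α₂ ∧
    cvar μ τX α₂ ≤ cvar μ τX α₃ ∧ cvar μ τX α₃ ≤ τbar := by
  have hm : MeasurableSpace.comap X m𝒳 ≤ ‹MeasurableSpace Ω› := hX.comap_le
  have hδi : Integrable δ μ := hδ.integrable (by norm_num)
  have hτXi : Integrable τX μ := hτX ▸ integrable_condExp
  have h21 : α₂ ≤ 1 := h23.trans h3
  have h02 : 0 < α₂ := h1.trans_le h12
  have h03 : 0 < α₃ := h02.trans_le h23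
  have hτint : ∫ ω, τX ω ∂μ = ∫ ω, δ ω ∂μ := by
    rw [hτX]; exact integral_condExp hm
  refine ⟨cvar_mono_alpha hδi h1 h12 h21, ?_, cvar_mono_alpha hτXi h02 h23 h3, ?_⟩
  · -- Jensen step
    refine ciSup_mono (cvar_bdd hτXi h02 h21) fun β => ?_
    have key : ∫ ω, min (δ ω - β) 0 ∂μ ≤ ∫ ω, min (τX ω - β) 0 ∂μ := by
      have hfi : Integrable (fun ω => min (δ ω - β) 0) μ := min_integrable hδi β
      have hgi : Integrable (fun ω => min (τX ω - β) 0) μ := min_integrable hτXi β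
      have hsub : Integrable (fun ω => δ ω - β) μ := hδi.sub (integrable_const β)
      have hconds : μ[fun ω => δ ω - β|MeasurableSpace.comap X m𝒳] =ᵐ[μ]
          fun ω => τX ω - β := by
        have h0 := condExp_sub (μ := μ) (m := MeasurableSpace.comap X m𝒳) hδi
          (integrable_const β)
        refine h0.trans ?_
        have hc := condExp_const (μ := μ) hm β
        rw [hc]
        filter_upwards with ω
        simp [hτX]
      have hA : μ[fun ω => min (δ ω - β) 0|MeasurableSpace.comap X m𝒳] ≤ᵐ[μ]
          fun ω => τX ω - β := by
        have h0 := condExp_mono (m := MeasurableSpace.comap X m𝒳) hfi hsub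
          (Filter.Eventually.of_forall fun ω => min_le_left (δ ω - β) 0)
        filter_upwards [h0, hconds] with ω h h'
        exact h.trans_eq h'
      have hB : μ[fun ω => min (δ ω - β) 0|MeasurableSpace.comap X m𝒳] ≤ᵐ[μ]
          fun _ => (0 : ℝ) := by
        have h0 := condExp_mono (m := MeasurableSpace.comap X m𝒳) hfi
          (integrable_const (0 : ℝ))
          (Filter.Eventually.of_forall fun ω => min_le_right (δ ω - β) 0)
        refine h0.trans_eq ?_
        rw [condExp_const hm]
      have hle : μ[fun ω => min (δ ω - β) 0|MeasurableSpace.comap X m𝒳] ≤ᵐ[μ]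
          fun ω => min (τX ω - β) 0 := by
        filter_upwards [hA, hB] with ω ha hb
        exact le_min ha hb
      calc ∫ ω, min (δ ω - β) 0 ∂μ
          = ∫ ω, (μ[fun ω => min (δ ω - β) 0|MeasurableSpace.comap X m𝒳]) ω ∂μ :=
            (integral_condExp hm).symm
        _ ≤ ∫ ω, min (τX ω - β) 0 ∂μ := integral_mono_ae integrable_condExp hgi hle
    have hpos : (0:ℝ) ≤ α₂⁻¹ := by positivity
    nlinarith
  · rw [hτbar, ← hτint]
    exact cvar_le_mean hτXi h03 h3
end

section
/- Let Z be an integrable real random variable and α ∈ (0,1). Then the supremum in CVaR_α(Z) = sup_{β ∈ ℝ} ( β + (1/α) E[min(Z − β, 0)] ) is attained at β = F_Z^{-1}(α); that is, CVaR_α(Z) = F_Z^{-1}(α) + (1/α) E[min(Z − F_Z^{-1}(α), 0)]. -/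
open MeasureTheory

section aux
variable {Ω : Type*} [MeasurableSpace Ω]

lemma quantile_nonempty_bdd (μ : Measure Ω) [IsProbabilityMeasure μ]
    (Z : Ω → ℝ) (hZm : Measurable Z) {α : ℝ} (hα : α ∈ Set.Ioo (0 : ℝ) 1) :
    {β : ℝ | α ≤ (μ {ω | Z ω ≤ β}).toReal}.Nonempty ∧
      BddBelow {β : ℝ | α ≤ (μ {ω | Z ω ≤ β}).toReal} := by
  obtain ⟨hα0, hα1⟩ := hα
  constructor
  · -- μ {Z ≤ n} → μ univ = 1
    have hmono : Monotone (fun n : ℕ => {ω | Z ω ≤ (n : ℝ)}) := by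
      intro m n hmn ω hω
      simp only [Set.mem_setOf_eq] at hω ⊢
      exact le_trans hω (by exact_mod_cast hmn)
    have hU : (⋃ n : ℕ, {ω | Z ω ≤ (n : ℝ)}) = Set.univ := by
      ext ω; simp only [Set.mem_iUnion, Set.mem_univ, iff_true, Set.mem_setOf_eq]
      obtain ⟨n, hn⟩ := exists_nat_ge (Z ω)
      exact ⟨n, hn⟩
    have htend := tendsto_measure_iUnion_atTop (μ := μ) hmono
    rw [hU, measure_univ] at htend
    have hlt : ENNReal.ofReal α < 1 := by
      rw [← ENNReal.ofReal_one]
      exact ENNReal.ofReal_lt_ofReal_iff one_pos |>.mpr hα1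
    have := htend.eventually (eventually_gt_nhds hlt)
    obtain ⟨n, hn⟩ := this.exists
    refine ⟨(n : ℝ), ?_⟩
    have : ENNReal.ofReal α ≤ μ {ω | Z ω ≤ (n : ℝ)} := le_of_lt hn
    exact (ENNReal.ofReal_le_iff_le_toReal (measure_ne_top μ _)).mp this
  · -- μ {Z ≤ -n} → μ ∅ = 0
    have hanti : Antitone (fun n : ℕ => {ω | Z ω ≤ -(n : ℝ)}) := by
      intro m n hmn ω hω
      simp only [Set.mem_setOf_eq] at hω ⊢
      refine le_trans hω (neg_le_neg ?_)
      exact_mod_cast hmn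
    have hI : (⋂ n : ℕ, {ω | Z ω ≤ -(n : ℝ)}) = ∅ := by
      ext ω; simp only [Set.mem_iInter, Set.mem_empty_iff_false, iff_false, Set.mem_setOf_eq,
        not_forall]
      obtain ⟨n, hn⟩ := exists_nat_gt (-(Z ω))
      exact ⟨n, by push_neg; linarith⟩
    have htend := tendsto_measure_iInter_atTop (μ := μ)
      (s := fun n : ℕ => {ω | Z ω ≤ -(n : ℝ)})
      (fun n => (hZm measurableSet_Iic).nullMeasurableSet) hanti ⟨0, measure_ne_top μ _⟩
    rw [hI, measure_empty] at htend
    have hlt : (0 : ENNReal) < ENNReal.ofReal α := by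
      simp [ENNReal.ofReal_pos, hα0]
    have := htend.eventually (eventually_lt_nhds hlt)
    obtain ⟨n, hn⟩ := this.exists
    refine ⟨-(n : ℝ), fun β hβ => ?_⟩
    by_contra hlt'
    push_neg at hlt'
    have hsub : μ {ω | Z ω ≤ β} ≤ μ {ω | Z ω ≤ -(n : ℝ)} :=
      measure_mono fun ω hω => le_trans hω (le_of_lt hlt')
    have h1 : (μ {ω | Z ω ≤ β}).toReal < α := by
      have : μ {ω | Z ω ≤ β} < ENNReal.ofReal α := lt_of_le_of_lt hsub hn
      have := ENNReal.toReal_lt_toReal (measure_ne_top μ _) ENNReal.ofReal_ne_top |>.mpr this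
      rwa [ENNReal.toReal_ofReal hα0.le] at this
    exact absurd hβ (not_le.mpr h1)

lemma quantile_cdf_ge (μ : Measure Ω) [IsProbabilityMeasure μ]
    (Z : Ω → ℝ) (hZm : Measurable Z) {α : ℝ} (hα : α ∈ Set.Ioo (0 : ℝ) 1) :
    α ≤ (μ {ω | Z ω ≤ sInf {β : ℝ | α ≤ (μ {ω | Z ω ≤ β}).toReal}}).toReal := by
  obtain ⟨hne, hbdd⟩ := quantile_nonempty_bdd μ Z hZm hα
  set q := sInf {β : ℝ | α ≤ (μ {ω | Z ω ≤ β}).toReal} with hq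
  have hanti : Antitone (fun n : ℕ => {ω | Z ω ≤ q + 1 / ((n : ℝ) + 1)}) := by
    intro m n hmn ω hω
    simp only [Set.mem_setOf_eq] at hω ⊢
    refine le_trans hω ?_
    gcongr
  have hI : (⋂ n : ℕ, {ω | Z ω ≤ q + 1 / (n + 1)}) = {ω | Z ω ≤ q} := by
    ext ω
    simp only [Set.mem_iInter, Set.mem_setOf_eq]
    constructor
    · intro h
      by_contra hlt
      push_neg at hlt
      obtain ⟨n, hn⟩ := exists_nat_one_div_lt (sub_pos.mpr hlt)
      have := h n
      linarith [hn]
    · intro h n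
      have : (0:ℝ) < 1 / (n + 1) := by positivity
      linarith
  have htend := tendsto_measure_iInter_atTop (μ := μ)
    (s := fun n : ℕ => {ω | Z ω ≤ q + 1 / ((n : ℝ) + 1)})
    (fun n => (hZm measurableSet_Iic).nullMeasurableSet) hanti ⟨0, measure_ne_top μ _⟩
  rw [hI] at htend
  have hev : ∀ n : ℕ, ENNReal.ofReal α ≤ μ {ω | Z ω ≤ q + 1 / (n + 1)} := by
    intro n
    have hpos : (0:ℝ) < 1 / (n + 1) := by positivity
    have hqlt : q < q + 1 / (n + 1) := by linarith
    obtain ⟨β, hβS, hβlt⟩ := (csInf_lt_iff hbdd hne).mp hqlt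
    have hmono : μ {ω | Z ω ≤ β} ≤ μ {ω | Z ω ≤ q + 1 / (n + 1)} :=
      measure_mono fun ω hω => le_trans hω hβlt.le
    refine le_trans ?_ hmono
    exact (ENNReal.ofReal_le_iff_le_toReal (measure_ne_top μ _)).mpr hβS
  have hlim : ENNReal.ofReal α ≤ μ {ω | Z ω ≤ q} :=
    ge_of_tendsto htend (Filter.Eventually.of_forall hev)
  exact (ENNReal.ofReal_le_iff_le_toReal (measure_ne_top μ _)).mp hlim

lemma quantile_cdf_lt (μ : Measure Ω) [IsProbabilityMeasure μ]
    (Z : Ω → ℝ) (hZm : Measurable Z) {α : ℝ} (hα : α ∈ Set.Ioo (0 : ℝ) 1) :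
    (μ {ω | Z ω < sInf {β : ℝ | α ≤ (μ {ω | Z ω ≤ β}).toReal}}).toReal ≤ α := by
  obtain ⟨hα0, hα1⟩ := hα
  set q := sInf {β : ℝ | α ≤ (μ {ω | Z ω ≤ β}).toReal} with hq
  have hmono : Monotone (fun n : ℕ => {ω | Z ω ≤ q - 1 / ((n : ℝ) + 1)}) := by
    intro m n hmn ω hω
    simp only [Set.mem_setOf_eq] at hω ⊢
    refine le_trans hω ?_
    gcongr
  have hU : (⋃ n : ℕ, {ω | Z ω ≤ q - 1 / (n + 1)}) = {ω | Z ω < q} := by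
    ext ω
    simp only [Set.mem_iUnion, Set.mem_setOf_eq]
    constructor
    · rintro ⟨n, hn⟩
      have : (0:ℝ) < 1 / (n + 1) := by positivity
      linarith
    · intro h
      obtain ⟨n, hn⟩ := exists_nat_one_div_lt (sub_pos.mpr h)
      exact ⟨n, by linarith [hn]⟩
  have htend := tendsto_measure_iUnion_atTop (μ := μ) hmono
  rw [hU] at htend
  have hev : ∀ n : ℕ, μ {ω | Z ω ≤ q - 1 / (n + 1)} ≤ ENNReal.ofReal α := by
    intro n
    have hnotmem : q - 1 / (n + 1) ∉ {β : ℝ | α ≤ (μ {ω | Z ω ≤ β}).toReal} := by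
      intro hmem
      have : q ≤ q - 1 / (n + 1) := csInf_le (quantile_nonempty_bdd μ Z hZm ⟨hα0, hα1⟩).2 hmem
      have hpos : (0:ℝ) < 1 / (n + 1) := by positivity
      linarith
    simp only [Set.mem_setOf_eq, not_le] at hnotmem
    exact ((ENNReal.lt_ofReal_iff_toReal_lt (measure_ne_top μ _)).mpr hnotmem).le
  have hlim : μ {ω | Z ω < q} ≤ ENNReal.ofReal α :=
    le_of_tendsto htend (Filter.Eventually.of_forall hev)
  calc (μ {ω | Z ω < q}).toReal ≤ (ENNReal.ofReal α).toReal :=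
        ENNReal.toReal_mono ENNReal.ofReal_ne_top hlim
    _ = α := ENNReal.toReal_ofReal hα0.le

end aux

/-- For integrable `Z` and `α ∈ (0,1)`, the supremum defining `CVaR_α(Z)`
is attained at the `α`-quantile: `CVaR_α(Z) = F_Z⁻¹(α) + α⁻¹ E[min(Z − F_Z⁻¹(α), 0)]`. -/
theorem cvar_attained_at_quantile {Ω : Type*} [MeasurableSpace Ω]
    (μ : Measure Ω) [IsProbabilityMeasure μ]
    (Z : Ω → ℝ) (hZm : Measurable Z) (hZi : Integrable Z μ)
    (α : ℝ) (hα : α ∈ Set.Ioo (0 : ℝ) 1) :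
    cvar μ Z α = quantile μ Z α + α⁻¹ * ∫ ω, min (Z ω - quantile μ Z α) 0 ∂μ := by
  obtain ⟨hα0, hα1⟩ := hα
  have hqdef : quantile μ Z α = sInf {β : ℝ | α ≤ (μ {ω | Z ω ≤ β}).toReal} := rfl
  set q := quantile μ Z α with hq
  have hmin : ∀ β : ℝ, Integrable (fun ω => min (Z ω - β) 0) μ := fun β => by
    have := (hZi.sub (integrable_const β)).inf (integrable_const (0:ℝ))
    exact this
  have hge : α ≤ (μ {ω | Z ω ≤ q}).toReal := quantile_cdf_ge μ Z hZm ⟨hα0, hα1⟩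
  have hlt : (μ {ω | Z ω < q}).toReal ≤ α := quantile_cdf_lt μ Z hZm ⟨hα0, hα1⟩
  -- key: for every β, g β ≤ g q
  have key : ∀ β : ℝ, β + α⁻¹ * ∫ ω, min (Z ω - β) 0 ∂μ ≤
      q + α⁻¹ * ∫ ω, min (Z ω - q) 0 ∂μ := by
    intro β
    rcases le_total β q with hbq | hqb
    · -- β ≤ q : min(Z−β,0) ≤ min(Z−q,0) + (q−β)·1{Z<q}
      have hptw : ∀ ω, min (Z ω - β) 0 ≤
          min (Z ω - q) 0 + Set.indicator {ω | Z ω < q} (fun _ => q - β) ω := by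
        intro ω
        by_cases h : Z ω < q
        · rw [Set.indicator_of_mem (show ω ∈ {ω | Z ω < q} from h)]
          have h1 : min (Z ω - β) 0 ≤ Z ω - β := min_le_left _ _
          have h2 : min (Z ω - q) 0 = Z ω - q := min_eq_left (by linarith)
          rw [h2]; linarith
        · rw [Set.indicator_of_notMem (show ω ∉ {ω | Z ω < q} from h)]
          push_neg at h
          have h2 : min (Z ω - q) 0 = 0 := min_eq_right (by linarith)
          rw [h2, add_zero]
          exact min_le_right _ _
      have hms : MeasurableSet {ω | Z ω < q} := hZm measurableSet_Iio
      have hint2 : Integrable (fun ω => min (Z ω - q) 0 +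
          Set.indicator {ω | Z ω < q} (fun _ => q - β) ω) μ :=
        (hmin q).add ((integrable_const (q - β)).indicator hms)
      have hIle := integral_mono (hmin β) hint2 hptw
      rw [integral_add (hmin q) ((integrable_const (q - β)).indicator hms),
        integral_indicator_const _ hms, smul_eq_mul] at hIle
      have hα' : 0 < α⁻¹ := inv_pos.mpr hα0
      have hstep : α⁻¹ * ((μ {ω | Z ω < q}).toReal * (q - β)) ≤ q - β := by
        have hPn : (0:ℝ) ≤ (μ {ω | Z ω < q}).toReal := ENNReal.toReal_nonneg
        have h1 : α⁻¹ * (μ {ω | Z ω < q}).toReal ≤ 1 := by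
          rw [← inv_mul_cancel₀ hα0.ne']
          exact mul_le_mul_of_nonneg_left hlt hα'.le
        calc α⁻¹ * ((μ {ω | Z ω < q}).toReal * (q - β))
            = (α⁻¹ * (μ {ω | Z ω < q}).toReal) * (q - β) := by ring
          _ ≤ 1 * (q - β) := mul_le_mul_of_nonneg_right h1 (by linarith)
          _ = q - β := one_mul _
      calc β + α⁻¹ * ∫ ω, min (Z ω - β) 0 ∂μ
          ≤ β + α⁻¹ * (∫ ω, min (Z ω - q) 0 ∂μ + (μ {ω | Z ω < q}).toReal * (q - β)) := by
            gcongr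
            exact hIle
        _ = β + α⁻¹ * ∫ ω, min (Z ω - q) 0 ∂μ + α⁻¹ * ((μ {ω | Z ω < q}).toReal * (q - β)) := by
            ring
        _ ≤ β + α⁻¹ * ∫ ω, min (Z ω - q) 0 ∂μ + (q - β) := by linarith [hstep]
        _ = q + α⁻¹ * ∫ ω, min (Z ω - q) 0 ∂μ := by ring
    · -- q ≤ β : min(Z−β,0) ≤ min(Z−q,0) − (β−q)·1{Z≤q}
      have hptw : ∀ ω, min (Z ω - β) 0 ≤
          min (Z ω - q) 0 + Set.indicator {ω | Z ω ≤ q} (fun _ => -(β - q)) ω := by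
        intro ω
        by_cases h : Z ω ≤ q
        · rw [Set.indicator_of_mem (show ω ∈ {ω | Z ω ≤ q} from h)]
          have h1 : min (Z ω - β) 0 = Z ω - β := min_eq_left (by linarith)
          have h2 : min (Z ω - q) 0 = Z ω - q := min_eq_left (by linarith)
          rw [h1, h2]; linarith
        · rw [Set.indicator_of_notMem (show ω ∉ {ω | Z ω ≤ q} from h), add_zero]
          push_neg at h
          exact min_le_min (by linarith) le_rfl
      have hms : MeasurableSet {ω | Z ω ≤ q} := hZm measurableSet_Iic
      have hint2 : Integrable (fun ω => min (Z ω - q) 0 +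
          Set.indicator {ω | Z ω ≤ q} (fun _ => -(β - q)) ω) μ :=
        (hmin q).add ((integrable_const (-(β - q))).indicator hms)
      have hIle := integral_mono (hmin β) hint2 hptw
      rw [integral_add (hmin q) ((integrable_const (-(β - q))).indicator hms),
        integral_indicator_const _ hms, smul_eq_mul] at hIle
      have hα' : 0 < α⁻¹ := inv_pos.mpr hα0
      have hstep : β - q ≤ α⁻¹ * ((μ {ω | Z ω ≤ q}).toReal * (β - q)) := by
        have h1 : 1 ≤ α⁻¹ * (μ {ω | Z ω ≤ q}).toReal := by
          rw [← inv_mul_cancel₀ hα0.ne']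
          exact mul_le_mul_of_nonneg_left hge hα'.le
        calc β - q = 1 * (β - q) := (one_mul _).symm
          _ ≤ (α⁻¹ * (μ {ω | Z ω ≤ q}).toReal) * (β - q) :=
              mul_le_mul_of_nonneg_right h1 (by linarith)
          _ = α⁻¹ * ((μ {ω | Z ω ≤ q}).toReal * (β - q)) := by ring
      calc β + α⁻¹ * ∫ ω, min (Z ω - β) 0 ∂μ
          ≤ β + α⁻¹ * (∫ ω, min (Z ω - q) 0 ∂μ + (μ {ω | Z ω ≤ q}).toReal * (-(β - q))) := by
            gcongr
            exact hIle
        _ = β + α⁻¹ * ∫ ω, min (Z ω - q) 0 ∂μ - α⁻¹ * ((μ {ω | Z ω ≤ q}).toReal * (β - q)) := by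
            ring
        _ ≤ β + α⁻¹ * ∫ ω, min (Z ω - q) 0 ∂μ - (β - q) := by linarith [hstep]
        _ = q + α⁻¹ * ∫ ω, min (Z ω - q) 0 ∂μ := by ring
  have hbdd : BddAbove (Set.range fun β : ℝ => β + α⁻¹ * ∫ ω, min (Z ω - β) 0 ∂μ) := by
    refine ⟨q + α⁻¹ * ∫ ω, min (Z ω - q) 0 ∂μ, ?_⟩
    rintro x ⟨β, rfl⟩
    exact key β
  exact le_antisymm (ciSup_le key) (le_ciSup hbdd q)
end

section
/- Let Z be an integrable real random variable and α ∈ (0,1). If F_Z(F_Z^{-1}(α)) = α, then CVaR_α(Z) = E[ Z | Z ≤ F_Z^{-1}(α) ]. -/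
/-!
Write `f(β) = β + α⁻¹ E[min (Z − β) 0]` and `q = F_Z⁻¹(α)`. Moving the threshold from `q` to `β`
changes `min (Z − β) 0` by at most `q − β` on `{Z ≤ q}` and makes it no larger off that set, so
`f(β) ≤ β + α⁻¹ (E[min (Z − q) 0] + (q − β) P(Z ≤ q)) = f(q)` as soon as `P(Z ≤ q) = α`. Hence the
supremum defining CVaR is attained at `q`, and `f(q) = q + α⁻¹ (E[Z; Z ≤ q] − q α) = E[Z; Z ≤ q] / α`.
-/

open MeasureTheory

lemma min_sub_zero_le_add_indicator (z β q : ℝ) :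
    min (z - β) 0 ≤ min (z - q) 0 + (Set.Iic q).indicator (fun _ => q - β) z := by
  by_cases hz : z ≤ q
  · rw [Set.indicator_of_mem (Set.mem_Iic.mpr hz), min_eq_left (sub_nonpos.mpr hz)]
    exact (min_le_left _ _).trans_eq (by ring)
  · have hzq : min (z - q) 0 = 0 := min_eq_right (by linarith)
    rw [Set.indicator_of_notMem (by simpa using hz), hzq, add_zero]
    exact min_le_right _ _

section Tail

variable {Ω : Type*} [MeasurableSpace Ω] {μ : Measure Ω} {Z : Ω → ℝ}

lemma MeasureTheory.Integrable.min_sub_const_zero [IsFiniteMeasure μ] (hZ : Integrable Z μ)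
    (β : ℝ) :
    Integrable (fun ω => min (Z ω - β) 0) μ :=
  (hZ.sub (integrable_const β)).inf (integrable_const 0)

lemma integral_min_sub_zero_eq [IsFiniteMeasure μ] (hZm : Measurable Z) (hZi : Integrable Z μ)
    (q : ℝ) :
    ∫ ω, min (Z ω - q) 0 ∂μ = (∫ ω in {ω | Z ω ≤ q}, Z ω ∂μ) - q * μ.real {ω | Z ω ≤ q} := by
  have hS : MeasurableSet {ω | Z ω ≤ q} := hZm measurableSet_Iic
  have hmin : (fun ω => min (Z ω - q) 0) = {ω | Z ω ≤ q}.indicator (fun ω => Z ω - q) := by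
    funext ω
    by_cases hz : Z ω ≤ q
    · rw [Set.indicator_of_mem (s := {ω | Z ω ≤ q}) hz, min_eq_left (sub_nonpos.mpr hz)]
    · rw [Set.indicator_of_notMem (s := {ω | Z ω ≤ q}) hz, min_eq_right (by linarith)]
  rw [hmin, integral_indicator hS,
    integral_sub hZi.restrict (integrable_const q), setIntegral_const, smul_eq_mul, mul_comm]

lemma integral_min_sub_zero_le [IsFiniteMeasure μ] (hZm : Measurable Z) (hZi : Integrable Z μ)
    (β q : ℝ) :
    ∫ ω, min (Z ω - β) 0 ∂μ ≤ ∫ ω, min (Z ω - q) 0 ∂μ + (q - β) * μ.real {ω | Z ω ≤ q} := by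
  have hS : MeasurableSet {ω | Z ω ≤ q} := hZm measurableSet_Iic
  have hind : Integrable ({ω | Z ω ≤ q}.indicator fun _ => q - β) μ :=
    (integrable_const _).indicator hS
  calc ∫ ω, min (Z ω - β) 0 ∂μ
      ≤ ∫ ω, min (Z ω - q) 0 + {ω | Z ω ≤ q}.indicator (fun _ => q - β) ω ∂μ :=
        integral_mono (hZi.min_sub_const_zero β) ((hZi.min_sub_const_zero q).add hind)
          fun ω => min_sub_zero_le_add_indicator (Z ω) β q
    _ = ∫ ω, min (Z ω - q) 0 ∂μ + (q - β) * μ.real {ω | Z ω ≤ q} := by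
        rw [integral_add (hZi.min_sub_const_zero q) hind, integral_indicator_const _ hS,
          smul_eq_mul, mul_comm]

lemma cvar_eq_add_inv_mul_integral_of_measureReal_eq [IsFiniteMeasure μ] (hZm : Measurable Z)
    (hZi : Integrable Z μ) {α q : ℝ} (hα : 0 < α) (hq : μ.real {ω | Z ω ≤ q} = α) :
    cvar μ Z α = q + α⁻¹ * ∫ ω, min (Z ω - q) 0 ∂μ := by
  have hmax : ∀ β : ℝ, β + α⁻¹ * ∫ ω, min (Z ω - β) 0 ∂μ
      ≤ q + α⁻¹ * ∫ ω, min (Z ω - q) 0 ∂μ := fun β =>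
    calc β + α⁻¹ * ∫ ω, min (Z ω - β) 0 ∂μ
        ≤ β + α⁻¹ * (∫ ω, min (Z ω - q) 0 ∂μ + (q - β) * α) := by
          gcongr
          exact hq ▸ integral_min_sub_zero_le hZm hZi β q
      _ = q + α⁻¹ * ∫ ω, min (Z ω - q) 0 ∂μ := by field_simp; ring
  exact le_antisymm (ciSup_le hmax) (le_ciSup ⟨_, Set.forall_mem_range.mpr hmax⟩ q)

lemma cvar_eq_setIntegral_div [IsFiniteMeasure μ] (hZm : Measurable Z) (hZi : Integrable Z μ)
    {α q : ℝ} (hα : 0 < α) (hq : μ.real {ω | Z ω ≤ q} = α) :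
    cvar μ Z α = (∫ ω in {ω | Z ω ≤ q}, Z ω ∂μ) / α := by
  rw [cvar_eq_add_inv_mul_integral_of_measureReal_eq hZm hZi hα hq,
    integral_min_sub_zero_eq hZm hZi, hq]
  field_simp
  ring

end Tail

/-- For integrable `Z` and `α ∈ (0,1)`, if `F_Z(F_Z⁻¹(α)) = α` then
`CVaR_α(Z) = E[Z ∣ Z ≤ F_Z⁻¹(α)]`. -/
theorem cvar_eq_tail_expectation {Ω : Type*} [MeasurableSpace Ω]
    (μ : Measure Ω) [IsProbabilityMeasure μ]
    (Z : Ω → ℝ) (hZm : Measurable Z) (hZi : Integrable Z μ)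
    (α : ℝ) (hα : α ∈ Set.Ioo (0 : ℝ) 1)
    (hq : (μ {ω | Z ω ≤ quantile μ Z α}).toReal = α) :
    cvar μ Z α = (∫ ω in {ω | Z ω ≤ quantile μ Z α}, Z ω ∂μ) /
      (μ {ω | Z ω ≤ quantile μ Z α}).toReal := by
  rw [hq]
  exact cvar_eq_setIntegral_div hZm hZi hα.1 hq
end

section
/- Let Z be an integrable real random variable. Then the map α ↦ CVaR_α(Z) is continuous on (0,1]. -/
open MeasureTheory

section aux

variable {Ω : Type*} [MeasurableSpace Ω] {μ : Measure Ω} [IsProbabilityMeasure μ] {Z : Ω → ℝ}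

lemma intmin (hZi : Integrable Z μ) (β : ℝ) :
    Integrable (fun ω => min (Z ω - β) 0) μ :=
  (hZi.sub (integrable_const β)).inf (integrable_const 0)

lemma G_nonpos (β : ℝ) : (∫ ω, min (Z ω - β) 0 ∂μ) ≤ 0 :=
  integral_nonpos (fun ω => min_le_right _ _)

lemma G_le (hZi : Integrable Z μ) (β : ℝ) :
    (∫ ω, min (Z ω - β) 0 ∂μ) ≤ (∫ ω, Z ω ∂μ) - β := by
  have h2 : (∫ ω, (Z ω - β) ∂μ) = (∫ ω, Z ω ∂μ) - β := by
    rw [integral_sub hZi (integrable_const β), integral_const, probReal_univ,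
      smul_eq_mul, one_mul]
  calc (∫ ω, min (Z ω - β) 0 ∂μ) ≤ ∫ ω, (Z ω - β) ∂μ :=
        integral_mono (intmin hZi β) (hZi.sub (integrable_const β)) (fun ω => min_le_left _ _)
    _ = _ := h2

lemma term_le_s14 (hZi : Integrable Z μ) {c : ℝ} (hc : 1 ≤ c) (β : ℝ) :
    β + c * ∫ ω, min (Z ω - β) 0 ∂μ ≤ max 0 (c * ∫ ω, Z ω ∂μ) := by
  rcases le_or_gt β 0 with hβ | hβ
  · have : c * ∫ ω, min (Z ω - β) 0 ∂μ ≤ 0 :=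
      mul_nonpos_of_nonneg_of_nonpos (by linarith) (G_nonpos β)
    have := add_le_add hβ this
    simpa using this.trans (le_max_left _ _)
  · have h1 : c * ∫ ω, min (Z ω - β) 0 ∂μ ≤ c * ((∫ ω, Z ω ∂μ) - β) :=
      mul_le_mul_of_nonneg_left (G_le hZi β) (by linarith)
    have : β + c * ((∫ ω, Z ω ∂μ) - β) ≤ c * ∫ ω, Z ω ∂μ := by nlinarith
    exact le_trans (by linarith) (this.trans (le_max_right _ _))

lemma bdd_range (hZi : Integrable Z μ) {c : ℝ} (hc : 1 ≤ c) :
    BddAbove (Set.range fun β : ℝ => β + c * ∫ ω, min (Z ω - β) 0 ∂μ) :=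
  ⟨max 0 (c * ∫ ω, Z ω ∂μ), by rintro x ⟨β, rfl⟩; exact term_le_s14 hZi hc β⟩

/-- the auxiliary function -/
noncomputable def hfun (μ : Measure Ω) (Z : Ω → ℝ) (c : ℝ) : ℝ :=
  ⨆ β : ℝ, β + c * ∫ ω, min (Z ω - β) 0 ∂μ

lemma hfun_convexOn (hZi : Integrable Z μ) :
    ConvexOn ℝ (Set.Ici (1:ℝ)) (hfun μ Z) := by
  refine ⟨convex_Ici 1, ?_⟩
  intro a ha b hb s t hs ht hst
  refine ciSup_le fun β => ?_
  have h1 : β + a * ∫ ω, min (Z ω - β) 0 ∂μ ≤ hfun μ Z a :=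
    le_ciSup (bdd_range hZi ha) β
  have h2 : β + b * ∫ ω, min (Z ω - β) 0 ∂μ ≤ hfun μ Z b :=
    le_ciSup (bdd_range hZi hb) β
  have : β + (s • a + t • b) * ∫ ω, min (Z ω - β) 0 ∂μ
      = s * (β + a * ∫ ω, min (Z ω - β) 0 ∂μ) + t * (β + b * ∫ ω, min (Z ω - β) 0 ∂μ) := by
    simp only [smul_eq_mul]; linear_combination -β * hst
  rw [this]
  simp only [smul_eq_mul]
  exact add_le_add (mul_le_mul_of_nonneg_left h1 hs) (mul_le_mul_of_nonneg_left h2 ht)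

lemma hfun_antitone (hZi : Integrable Z μ) :
    AntitoneOn (hfun μ Z) (Set.Ici (1:ℝ)) := by
  intro a ha b hb hab
  refine ciSup_le fun β => ?_
  have h1 : β + b * ∫ ω, min (Z ω - β) 0 ∂μ ≤ β + a * ∫ ω, min (Z ω - β) 0 ∂μ := by
    have := mul_le_mul_of_nonpos_right hab (G_nonpos (μ := μ) (Z := Z) β)
    linarith
  exact h1.trans (le_ciSup (bdd_range hZi ha) β)

lemma hfun_continuousOn (hZi : Integrable Z μ) :
    ContinuousOn (hfun μ Z) (Set.Ici (1:ℝ)) := by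
  have hint : ContinuousOn (hfun μ Z) (Set.Ioi (1:ℝ)) :=
    ((hfun_convexOn hZi).subset Set.Ioi_subset_Ici_self (convex_Ioi 1)).continuousOn isOpen_Ioi
  intro c hc
  rcases eq_or_lt_of_le (Set.mem_Ici.mp hc) with hc1 | hc1
  · -- endpoint c = 1
    subst hc1
    rw [Metric.continuousWithinAt_iff]
    intro ε hε
    -- pick β0 with β0 + G β0 > hfun 1 - ε/2
    have hne : (Set.range fun β : ℝ => β + 1 * ∫ ω, min (Z ω - β) 0 ∂μ).Nonempty :=
      ⟨_, ⟨0, rfl⟩⟩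
    obtain ⟨β0, hβ0⟩ := exists_lt_of_lt_ciSup
      (show hfun μ Z 1 - ε/2 < hfun μ Z 1 by linarith)
    set Gβ := ∫ ω, min (Z ω - β0) 0 ∂μ with hG
    refine ⟨min 1 (ε/2 / (|Gβ| + 1)), by positivity, fun {x} hx hdx => ?_⟩
    have hx1 : (1:ℝ) ≤ x := hx
    have hle : hfun μ Z x ≤ hfun μ Z 1 :=
      hfun_antitone hZi (by norm_num) hx (by exact hx1)
    have hlow : hfun μ Z 1 - ε < hfun μ Z x := by
      have h1 : β0 + x * Gβ ≤ hfun μ Z x := le_ciSup (bdd_range hZi hx1) β0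
      have h2 : β0 + x * Gβ = β0 + 1 * Gβ + (x - 1) * Gβ := by ring
      have h3 : |(x - 1) * Gβ| ≤ ε / 2 := by
        rw [abs_mul]
        have hd : |x - 1| ≤ ε/2 / (|Gβ| + 1) := by
          have := le_of_lt hdx
          simpa [Real.dist_eq] using (le_min_iff.mp this).2
        calc |x - 1| * |Gβ| ≤ (ε/2 / (|Gβ| + 1)) * (|Gβ| + 1) := by
              apply mul_le_mul hd (by linarith [abs_nonneg Gβ]) (abs_nonneg _) (by positivity)
          _ = ε / 2 := by field_simp
        
      have : hfun μ Z 1 - ε/2 - ε/2 < β0 + x * Gβ := by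
        rw [h2]
        have := neg_le_of_abs_le h3
        linarith
      linarith
    rw [Real.dist_eq, abs_lt]
    constructor <;> linarith
  · exact ((hint.continuousAt (Ioi_mem_nhds hc1)).continuousWithinAt)

end aux

/-- For integrable `Z`, the map `α ↦ CVaR_α(Z)` is continuous on `(0,1]`. -/
theorem cvar_continuousOn {Ω : Type*} [MeasurableSpace Ω]
    (μ : Measure Ω) [IsProbabilityMeasure μ]
    (Z : Ω → ℝ) (hZm : Measurable Z) (hZi : Integrable Z μ) :
    ContinuousOn (fun α => cvar μ Z α) (Set.Ioc (0 : ℝ) 1) := by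
  have heq : ∀ α, cvar μ Z α = hfun μ Z α⁻¹ := fun α => rfl
  have hinv : ContinuousOn (fun α : ℝ => α⁻¹) (Set.Ioc (0:ℝ) 1) := by
    apply ContinuousOn.inv₀ continuousOn_id
    intro x hx; exact ne_of_gt hx.1
  have hmaps : Set.MapsTo (fun α : ℝ => α⁻¹) (Set.Ioc (0:ℝ) 1) (Set.Ici (1:ℝ)) := by
    intro x hx
    exact Set.mem_Ici.mpr ((one_le_inv₀ hx.1).mpr hx.2)
  have := (hfun_continuousOn hZi).comp hinv hmaps
  simpa [heq, Function.comp_def] using this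
end

section
/- Let Z be an integrable real random variable and 0 < α < α' < 1. If F_Z(F_Z^{-1}(α)) = α and F_Z(F_Z^{-1}(α')) = α', then E[ Z | F_Z^{-1}(α) < Z ≤ F_Z^{-1}(α') ] = ( α' · CVaR_{α'}(Z) − α · CVaR_α(Z) ) / (α' − α). -/
open MeasureTheory

lemma cvar_mul_aux {Ω : Type*} [MeasurableSpace Ω] (μ : Measure Ω) [IsProbabilityMeasure μ]
    (Z : Ω → ℝ) (hZm : Measurable Z) (hZi : Integrable Z μ) (q α : ℝ) (hα : 0 < α)
    (hqα : (μ {ω | Z ω ≤ q}).toReal = α) :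
    α * cvar μ Z α = ∫ ω in {ω | Z ω ≤ q}, Z ω ∂μ := by
  have hms : MeasurableSet {ω | Z ω ≤ q} := measurableSet_le hZm measurable_const
  have hInt : ∀ β : ℝ, Integrable (fun ω => min (Z ω - β) 0) μ := fun β =>
    (hZi.sub (integrable_const β)).inf (integrable_const 0)
  set g : ℝ → ℝ := fun β => β + α⁻¹ * ∫ ω, min (Z ω - β) 0 ∂μ with hg
  have hle : ∀ β, g β ≤ g q := by
    intro β
    have hpt : ∀ ω, min (Z ω - β) 0 ≤
        min (Z ω - q) 0 + Set.indicator {ω | Z ω ≤ q} (fun _ => q - β) ω := by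
      intro ω
      by_cases hω : Z ω ≤ q
      · rw [Set.indicator_of_mem (show ω ∈ {ω | Z ω ≤ q} from hω), min_eq_left (by linarith : Z ω - q ≤ 0)]
        have := min_le_left (Z ω - β) 0
        linarith
      · rw [Set.indicator_of_notMem (show ω ∉ {ω | Z ω ≤ q} from hω), min_eq_right (by push_neg at hω; linarith : (0:ℝ) ≤ Z ω - q)]
        have := min_le_right (Z ω - β) 0
        linarith
    have hmono : ∫ ω, min (Z ω - β) 0 ∂μ ≤
        ∫ ω, (min (Z ω - q) 0 + Set.indicator {ω | Z ω ≤ q} (fun _ => q - β) ω) ∂μ :=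
      integral_mono (hInt β) ((hInt q).add ((integrable_const _).indicator hms)) hpt
    have hind : ∫ ω, Set.indicator {ω | Z ω ≤ q} (fun _ => q - β) ω ∂μ = (q - β) * α := by
      rw [integral_indicator_const _ hms, measureReal_def, hqα, smul_eq_mul, mul_comm]
    rw [integral_add (hInt q) ((integrable_const _).indicator hms), hind] at hmono
    have hαinv : α⁻¹ * α = 1 := inv_mul_cancel₀ hα.ne'
    have h2 : α⁻¹ * ((∫ ω, min (Z ω - q) 0 ∂μ) + (q - β) * α)
        = α⁻¹ * (∫ ω, min (Z ω - q) 0 ∂μ) + (q - β) := by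
      rw [mul_add]; ring_nf; rw [mul_comm α α⁻¹, hαinv]; ring
    simp only [hg]
    nlinarith [mul_le_mul_of_nonneg_left hmono (le_of_lt (inv_pos.mpr hα))]
  have hcvar : cvar μ Z α = g q := by
    refine le_antisymm (ciSup_le hle) (le_ciSup ⟨g q, ?_⟩ q)
    rintro x ⟨β, rfl⟩; exact hle β
  have hminI : ∫ ω, min (Z ω - q) 0 ∂μ = (∫ ω in {ω | Z ω ≤ q}, Z ω ∂μ) - q * α := by
    have heq : (fun ω => min (Z ω - q) 0)
        = Set.indicator {ω | Z ω ≤ q} (fun ω => Z ω - q) := by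
      funext ω
      by_cases hω : Z ω ≤ q
      · rw [Set.indicator_of_mem (show ω ∈ {ω | Z ω ≤ q} from hω), min_eq_left (by linarith)]
      · rw [Set.indicator_of_notMem (show ω ∉ {ω | Z ω ≤ q} from hω), min_eq_right (by push_neg at hω; linarith)]
    rw [heq, integral_indicator hms,
      integral_sub hZi.integrableOn (integrable_const q).integrableOn,
      setIntegral_const, measureReal_def, hqα, smul_eq_mul, mul_comm α q]
  rw [hcvar, hg]
  simp only
  rw [hminI]
  field_simp
  ring

/-- For integrable `Z` and `0 < α < α' < 1` with `F_Z(F_Z⁻¹(α)) = α` and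
`F_Z(F_Z⁻¹(α')) = α'`:
`E[Z ∣ F_Z⁻¹(α) < Z ≤ F_Z⁻¹(α')] = (α'·CVaR_{α'}(Z) − α·CVaR_α(Z)) / (α' − α)`. -/
theorem interquantile_average {Ω : Type*} [MeasurableSpace Ω]
    (μ : Measure Ω) [IsProbabilityMeasure μ]
    (Z : Ω → ℝ) (hZm : Measurable Z) (hZi : Integrable Z μ)
    (α α' : ℝ) (hα : 0 < α) (hαα' : α < α') (hα' : α' < 1)
    (hq : (μ {ω | Z ω ≤ quantile μ Z α}).toReal = α)
    (hq' : (μ {ω | Z ω ≤ quantile μ Z α'}).toReal = α') :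
    (∫ ω in {ω | quantile μ Z α < Z ω ∧ Z ω ≤ quantile μ Z α'}, Z ω ∂μ) /
        (μ {ω | quantile μ Z α < Z ω ∧ Z ω ≤ quantile μ Z α'}).toReal =
      (α' * cvar μ Z α' - α * cvar μ Z α) / (α' - α) := by
  set q := quantile μ Z α with hqdef
  set q' := quantile μ Z α' with hq'def
  have hms : MeasurableSet {ω | Z ω ≤ q} := measurableSet_le hZm measurable_const
  have hqq' : q ≤ q' := by
    by_contra h
    push_neg at h
    have hsub : {ω | Z ω ≤ q'} ⊆ {ω | Z ω ≤ q} := fun ω hω => le_trans hω h.le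
    have := ENNReal.toReal_mono (measure_ne_top μ _) (measure_mono hsub)
    rw [hq, hq'] at this
    linarith
  have hsub : {ω | Z ω ≤ q} ⊆ {ω | Z ω ≤ q'} := fun ω hω => le_trans hω hqq'
  have hset : {ω | q < Z ω ∧ Z ω ≤ q'} = {ω | Z ω ≤ q'} \ {ω | Z ω ≤ q} := by
    ext ω; simp only [Set.mem_setOf_eq, Set.mem_diff, not_le]; tauto
  have hμ : (μ {ω | q < Z ω ∧ Z ω ≤ q'}).toReal = α' - α := by
    rw [hset, measure_diff hsub hms.nullMeasurableSet (measure_ne_top μ _),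
      ENNReal.toReal_sub_of_le (measure_mono hsub) (measure_ne_top μ _), hq, hq']
  have hint : (∫ ω in {ω | q < Z ω ∧ Z ω ≤ q'}, Z ω ∂μ) =
      (∫ ω in {ω | Z ω ≤ q'}, Z ω ∂μ) - ∫ ω in {ω | Z ω ≤ q}, Z ω ∂μ := by
    rw [hset, integral_diff hms hZi.integrableOn hsub]
  rw [hμ, hint, ← cvar_mul_aux μ Z hZm hZi q α hα hq,
    ← cvar_mul_aux μ Z hZm hZi q' α' (by linarith) hq']
end

section
/- Let X be a random element of a measurable space 𝒳, A ∈ {0,1} a random treatment indicator, Y(0), Y(1) bounded real random variables with (Y(0), Y(1)) conditionally independent of A given X (unconfoundedness), and Y = Y(A) the factual outcome. Let e(X) = P(A = 1 | X), μ(X, a) = E[Y(a) | X], and τ(X) = μ(X,1) − μ(X,0). Suppose ē ≤ e(X) ≤ 1 − ē almost surely for some ē > 0. Let w : 𝒳 → ℝ be bounded measurable, μ̌ : 𝒳 × {0,1} → ℝ bounded measurable, and ě : 𝒳 → ℝ measurable with ē ≤ ě(X) ≤ 1 − ē almost surely. If ě(X) = e(X) almost surely, or if μ̌(X, a) = μ(X,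 a) almost surely for a = 0 and a = 1, then E[ w(X) ( μ̌(X,1) − μ̌(X,0) + (A − ě(X)) / (ě(X)(1 − ě(X))) · (Y − μ̌(X,A)) ) ] = E[ w(X) τ(X) ]. -/
/-!
Conditionally on `X`, unconfoundedness factorises `E[1{A} Y(1) | X] = e(X) μ(X,1)` and
`E[(1 - 1{A}) Y(0) | X] = (1 - e(X)) μ(X,0)`. Hence the conditional mean of the doubly robust
score is `w (μ̌₁ - μ̌₀) + (w / ě) e (μ₁ - μ̌₁) - (w / (1 - ě)) (1 - e) (μ₀ - μ̌₀)`, which collapses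
to `w (μ₁ - μ₀)` as soon as `ě = e` or `μ̌ = μ`; integrating gives the claim.
-/

open MeasureTheory ProbabilityTheory

theorem integral_add_add_condExp {Ω : Type*} {m : MeasurableSpace Ω} [mΩ : MeasurableSpace Ω]
    {μ : Measure Ω} (hm : m ≤ mΩ) [SigmaFinite (μ.trim hm)] {f g k : Ω → ℝ}
    (hf : Integrable f μ) (hg : Integrable g μ) (hk : Integrable k μ) :
    ∫ ω, f ω + g ω + k ω ∂μ = ∫ ω, f ω + (μ[g | m]) ω + (μ[k | m]) ω ∂μ := by
  rw [integral_add (f := fun ω ↦ f ω + g ω) (hf.add hg) hk, integral_add hf hg,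
    integral_add (f := fun ω ↦ f ω + (μ[g | m]) ω) (hf.add integrable_condExp) integrable_condExp,
    integral_add hf integrable_condExp, integral_condExp hm, integral_condExp hm]

theorem memLp_top_of_abs_le {Ω : Type*} [MeasurableSpace Ω] {μ : Measure Ω} {f : Ω → ℝ}
    (hf : AEStronglyMeasurable f μ) {C : ℝ} (hC : ∀ᵐ ω ∂μ, |f ω| ≤ C) : MemLp f ⊤ μ :=
  memLp_top_of_bound hf C (by simpa only [Real.norm_eq_abs] using hC)

theorem memLp_top_div_of_abs_le {Ω : Type*} [MeasurableSpace Ω] {μ : Measure Ω} {f g : Ω → ℝ}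
    (hfg : AEStronglyMeasurable (fun ω ↦ f ω / g ω) μ) {C ε : ℝ} (hf : ∀ᵐ ω ∂μ, |f ω| ≤ C)
    (hε : 0 < ε) (hg : ∀ᵐ ω ∂μ, ε ≤ |g ω|) : MemLp (fun ω ↦ f ω / g ω) ⊤ μ := by
  refine memLp_top_of_abs_le hfg (C := C / ε) ?_
  filter_upwards [hf, hg] with ω hfω hgω
  rw [abs_div]
  exact div_le_div₀ ((abs_nonneg _).trans hfω) hfω hε hgω

theorem condExp_const_sub {Ω : Type*} {m : MeasurableSpace Ω} [mΩ : MeasurableSpace Ω]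
    {μ : Measure Ω} [IsFiniteMeasure μ] (hm : m ≤ mΩ) (c : ℝ) {f : Ω → ℝ} (hf : Integrable f μ) :
    μ[fun ω ↦ c - f ω | m] =ᵐ[μ] fun ω ↦ c - (μ[f | m]) ω := by
  filter_upwards [condExp_sub (integrable_const c) hf m] with ω h
  rw [show (fun ω ↦ c - f ω) = (fun _ ↦ c) - f from rfl, h, Pi.sub_apply, condExp_const hm]

namespace ProbabilityTheory

variable {Ω : Type*} {m : MeasurableSpace Ω} [mΩ : MeasurableSpace Ω] [StandardBorelSpace Ω]
  {hm : m ≤ mΩ} {μ : Measure Ω} [IsFiniteMeasure μ]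

theorem CondIndepFun.ae_indepFun_condExpKernel {β β' : Type*} [MeasurableSpace β]
    [MeasurableSpace β'] [MeasurableSpace.CountableOrCountablyGenerated Ω (β × β')]
    {f : Ω → β} {g : Ω → β'} (hfg : CondIndepFun m hm f g μ) (hf : Measurable f)
    (hg : Measurable g) :
    ∀ᵐ ω ∂μ, IndepFun f g (condExpKernel μ m ω) := by
  have h := (condIndepFun_iff_map_prod_eq_prod_map_map hf hg).1 hfg
  filter_upwards [ae_of_ae_trim hm h] with ω hω
  rw [indepFun_iff_map_prod_eq_prod_map_map hf.aemeasurable hg.aemeasurable]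
  simpa [Kernel.map_apply _ (hf.prodMk hg), Kernel.map_apply _ hf, Kernel.map_apply _ hg,
    Kernel.prod_apply] using hω

theorem CondIndepFun.condExp_mul {f g : Ω → ℝ} (hfg : CondIndepFun m hm f g μ)
    (hf : Measurable f) (hg : Measurable g) (hf_int : Integrable f μ) (hg_int : Integrable g μ)
    (hfg_int : Integrable (f * g) μ) :
    μ[f * g | m] =ᵐ[μ] μ[f | m] * μ[g | m] := by
  filter_upwards [condExp_ae_eq_integral_condExpKernel hm hfg_int,
    condExp_ae_eq_integral_condExpKernel hm hf_int, condExp_ae_eq_integral_condExpKernel hm hg_int,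
    hfg.ae_indepFun_condExpKernel hf hg] with ω hfgω hfω hgω hind
  rw [hfgω, Pi.mul_apply, hfω, hgω]
  exact hind.integral_mul_eq_mul_integral hf.aestronglyMeasurable hg.aestronglyMeasurable

theorem CondIndepFun.condExp_mul_mul_sub {h c Z J : Ω → ℝ} (hZJ : CondIndepFun m hm Z J μ)
    (hh : StronglyMeasurable[m] h) (hc : StronglyMeasurable[m] c) (hZ : Measurable Z)
    (hJ : Measurable J) (hh_top : MemLp h ⊤ μ) (hc_top : MemLp c ⊤ μ) (hZ_top : MemLp Z ⊤ μ)
    (hJ_top : MemLp J ⊤ μ) :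
    μ[fun ω ↦ h ω * (J ω * (Z ω - c ω)) | m]
      =ᵐ[μ] fun ω ↦ h ω * ((μ[J | m]) ω * ((μ[Z | m]) ω - c ω)) := by
  have hZJ_int : Integrable (Z * J) μ := (hJ_top.mul hZ_top).integrable le_top
  have hcJ_int : Integrable (c * J) μ := (hJ_top.mul hc_top).integrable le_top
  have hres_top : MemLp (fun ω ↦ J ω * (Z ω - c ω)) ⊤ μ := (hZ_top.sub hc_top).mul' hJ_top
  have hres : μ[fun ω ↦ J ω * (Z ω - c ω) | m]
      =ᵐ[μ] fun ω ↦ (μ[J | m]) ω * ((μ[Z | m]) ω - c ω) := by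
    have hsplit : (fun ω ↦ J ω * (Z ω - c ω)) = Z * J - c * J := by
      ext ω; simp only [Pi.sub_apply, Pi.mul_apply]; ring
    rw [hsplit]
    filter_upwards [condExp_sub hZJ_int hcJ_int m,
      hZJ.condExp_mul hZ hJ (hZ_top.integrable le_top) (hJ_top.integrable le_top) hZJ_int,
      condExp_mul_of_stronglyMeasurable_left hc hcJ_int (hJ_top.integrable le_top)]
      with ω h1 h2 h3
    rw [h1, Pi.sub_apply, h2, h3]
    simp only [Pi.mul_apply]
    ring
  filter_upwards [condExp_mul_of_stronglyMeasurable_left hh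
    ((hres_top.mul hh_top).integrable le_top) (hres_top.integrable le_top), hres] with ω h1 h2
  rw [← h2]
  exact h1

end ProbabilityTheory

theorem doubly_robust_score_split (w e : ℝ) (μ y : Bool → ℝ) (a : Bool) (he : e ≠ 0)
    (he' : 1 - e ≠ 0) :
    w * (μ true - μ false + ((if a then (1 : ℝ) else 0) - e) / (e * (1 - e)) * (y a - μ a))
      = w * (μ true - μ false) + w / e * ((if a then 1 else 0) * (y true - μ true))
        + -(w / (1 - e)) * ((1 - if a then 1 else 0) * (y false - μ false)) := by
  cases a <;> (simp only [Bool.false_eq_true, if_true, if_false]; field_simp; ring)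

theorem doubly_robust_conditional_mean (w ec e μc₀ μc₁ μ₀ μ₁ : ℝ) (hec : ec ≠ 0) (hec' : 1 - ec ≠ 0)
    (h : ec = e ∨ μc₀ = μ₀ ∧ μc₁ = μ₁) :
    w * (μc₁ - μc₀) + w / ec * (e * (μ₁ - μc₁)) + -(w / (1 - ec)) * ((1 - e) * (μ₀ - μc₀))
      = w * (μ₁ - μ₀) := by
  rcases h with rfl | ⟨rfl, rfl⟩
  · field_simp; ring
  · ring

theorem integral_doubly_robust_score_eq {Ω : Type*} {m : MeasurableSpace Ω}
    [mΩ : MeasurableSpace Ω] [StandardBorelSpace Ω] (hm : m ≤ mΩ) {μ : Measure Ω}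
    [IsFiniteMeasure μ] {A : Ω → Bool} (hA : Measurable A) {Y0 Y1 : Ω → ℝ}
    (hY0 : Measurable Y0) (hY1 : Measurable Y1) (hY0_top : MemLp Y0 ⊤ μ) (hY1_top : MemLp Y1 ⊤ μ)
    (hci : CondIndepFun m hm (fun ω ↦ (Y0 ω, Y1 ω)) A μ)
    {w e : Ω → ℝ} {μc : Bool → Ω → ℝ} (hw : Measurable[m] w) (he : Measurable[m] e)
    (hμc : ∀ a, Measurable[m] (μc a)) (hμc_top : ∀ a, MemLp (μc a) ⊤ μ) {Cw ε : ℝ}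
    (hwb : ∀ᵐ ω ∂μ, |w ω| ≤ Cw) (hε : 0 < ε) (he_bound : ∀ᵐ ω ∂μ, ε ≤ e ω ∧ e ω ≤ 1 - ε) :
    ∫ ω, w ω * (μc true ω - μc false ω +
        ((if A ω then (1 : ℝ) else 0) - e ω) / (e ω * (1 - e ω)) *
          ((if A ω then Y1 ω else Y0 ω) - μc (A ω) ω)) ∂μ
      = ∫ ω, w ω * (μc true ω - μc false ω)
          + w ω / e ω
            * ((μ[fun ω ↦ if A ω then (1 : ℝ) else 0 | m]) ω * ((μ[Y1 | m]) ω - μc true ω))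
          + -(w ω / (1 - e ω)) * ((1 - (μ[fun ω ↦ if A ω then (1 : ℝ) else 0 | m]) ω)
            * ((μ[Y0 | m]) ω - μc false ω)) ∂μ := by
  set I : Ω → ℝ := fun ω ↦ if A ω then 1 else 0
  have hφ : Measurable fun b : Bool ↦ if b then (1 : ℝ) else 0 := measurable_from_top
  have hIm : Measurable I := hφ.comp hA
  have hci₁ : CondIndepFun m hm Y1 I μ := hci.comp measurable_snd hφ
  have hci₀ : CondIndepFun m hm Y0 (fun ω ↦ 1 - I ω) μ :=
    hci.comp measurable_fst (measurable_const.sub hφ)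
  have hI_top : MemLp I ⊤ μ := memLp_top_of_abs_le hIm.aestronglyMeasurable (C := 1)
    (ae_of_all _ fun ω ↦ by by_cases h : A ω <;> simp [I, h])
  have hJ_top : MemLp (fun ω ↦ 1 - I ω) ⊤ μ := (memLp_top_const 1).sub hI_top
  have hbound : ∀ᵐ ω ∂μ, ε ≤ |e ω| ∧ ε ≤ |1 - e ω| := by
    filter_upwards [he_bound] with ω h
    exact ⟨h.1.trans (le_abs_self _), (by linarith : ε ≤ 1 - e ω).trans (le_abs_self _)⟩
  have hg₁ : Measurable[m] fun ω ↦ w ω / e ω := hw.div he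
  have hg₀ : Measurable[m] fun ω ↦ w ω / (1 - e ω) := hw.div (measurable_const.sub he)
  have hg₁_top := memLp_top_div_of_abs_le (hg₁.mono hm le_rfl).aestronglyMeasurable hwb hε
    (hbound.mono fun _ ↦ And.left)
  have hg₀_top := (memLp_top_div_of_abs_le (hg₀.mono hm le_rfl).aestronglyMeasurable hwb hε
    (hbound.mono fun _ ↦ And.right)).neg
  calc _ = ∫ ω, w ω * (μc true ω - μc false ω) + w ω / e ω * (I ω * (Y1 ω - μc true ω))
          + -(w ω / (1 - e ω)) * ((1 - I ω) * (Y0 ω - μc false ω)) ∂μ :=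
        integral_congr_ae <| hbound.mono fun ω h ↦ doubly_robust_score_split _ _ (μc · ω)
          (fun b ↦ if b then Y1 ω else Y0 ω) (A ω) (abs_pos.1 (hε.trans_le h.1))
          (abs_pos.1 (hε.trans_le h.2))
    _ = _ := integral_add_add_condExp hm
        ((((hμc_top true).sub (hμc_top false)).mul'
          (memLp_top_of_abs_le (hw.mono hm le_rfl).aestronglyMeasurable hwb)).integrable le_top)
        ((((hY1_top.sub (hμc_top true)).mul' hI_top (r := ⊤)).mul' hg₁_top).integrable le_top)
        ((((hY0_top.sub (hμc_top false)).mul' hJ_top (r := ⊤)).mul' hg₀_top).integrable le_top)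
    _ = _ := integral_congr_ae <| by
        filter_upwards [hci₁.condExp_mul_mul_sub hg₁.stronglyMeasurable
            (hμc true).stronglyMeasurable hY1 hIm hg₁_top (hμc_top true) hY1_top hI_top,
          hci₀.condExp_mul_mul_sub (h := fun ω ↦ -(w ω / (1 - e ω))) hg₀.neg.stronglyMeasurable
            (hμc false).stronglyMeasurable hY0 (measurable_const.sub hIm) hg₀_top
            (hμc_top false) hY0_top hJ_top,
          condExp_const_sub hm 1 (hI_top.integrable le_top)] with ω h₁ h₀ hJ
        rw [h₁, h₀, hJ]

theorem doubly_robust_weighted_ate_general {Ω 𝒳 : Type*} [mΩ : MeasurableSpace Ω]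
    [StandardBorelSpace Ω] {m𝒳 : MeasurableSpace 𝒳}
    (P : Measure Ω) [IsProbabilityMeasure P]
    (X : Ω → 𝒳) (hX : Measurable X)
    (A : Ω → Bool) (hA : Measurable A)
    (Y0 Y1 : Ω → ℝ) (hY0m : Measurable Y0) (hY1m : Measurable Y1)
    (B : ℝ) (hY0b : ∀ ω, |Y0 ω| ≤ B) (hY1b : ∀ ω, |Y1 ω| ≤ B)
    (hunconf : ProbabilityTheory.CondIndepFun (MeasurableSpace.comap X m𝒳) hX.comap_le
      (fun ω => (Y0 ω, Y1 ω)) A P)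
    (Y : Ω → ℝ) (hYdef : Y = fun ω => if A ω then Y1 ω else Y0 ω)
    (eX : Ω → ℝ)
    (heX : eX = P[fun ω => (if A ω then (1 : ℝ) else 0) | MeasurableSpace.comap X m𝒳])
    (μ0 μ1 : Ω → ℝ)
    (hμ0 : μ0 = P[Y0 | MeasurableSpace.comap X m𝒳])
    (hμ1 : μ1 = P[Y1 | MeasurableSpace.comap X m𝒳])
    (ebar : ℝ) (hebar : 0 < ebar)
    (w : 𝒳 → ℝ) (hwm : Measurable w) (Cw : ℝ) (hwb : ∀ x, |w x| ≤ Cw)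
    (μc : 𝒳 → Bool → ℝ) (hμcm : ∀ a, Measurable (fun x => μc x a))
    (Cμ : ℝ) (hμcb : ∀ x a, |μc x a| ≤ Cμ)
    (ec : 𝒳 → ℝ) (hecm : Measurable ec)
    (hecov : ∀ᵐ ω ∂P, ebar ≤ ec (X ω) ∧ ec (X ω) ≤ 1 - ebar)
    (hcase : ((fun ω => ec (X ω)) =ᵐ[P] eX) ∨
      (((fun ω => μc (X ω) false) =ᵐ[P] μ0) ∧ ((fun ω => μc (X ω) true) =ᵐ[P] μ1))) :
    ∫ ω, w (X ω) * (μc (X ω) true - μc (X ω) false +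
        ((if A ω then (1 : ℝ) else 0) - ec (X ω)) / (ec (X ω) * (1 - ec (X ω))) *
          (Y ω - μc (X ω) (A ω))) ∂P
      = ∫ ω, w (X ω) * (μ1 ω - μ0 ω) ∂P := by
  subst hYdef heX hμ0 hμ1
  have hXm : Measurable[MeasurableSpace.comap X m𝒳] X := comap_measurable X
  have hμc a : Measurable[MeasurableSpace.comap X m𝒳] fun ω ↦ μc (X ω) a := (hμcm a).comp hXm
  refine (integral_doubly_robust_score_eq hX.comap_le hA hY0m hY1m
    (memLp_top_of_abs_le hY0m.aestronglyMeasurable (ae_of_all P hY0b))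
    (memLp_top_of_abs_le hY1m.aestronglyMeasurable (ae_of_all P hY1b)) hunconf
    (w := fun ω ↦ w (X ω)) (e := fun ω ↦ ec (X ω)) (μc := fun a ω ↦ μc (X ω) a)
    (hwm.comp hXm) (hecm.comp hXm) hμc
    (fun a ↦ memLp_top_of_abs_le ((hμc a).mono hX.comap_le le_rfl).aestronglyMeasurable
      (ae_of_all _ fun _ ↦ hμcb _ a))
    (ae_of_all _ fun _ ↦ hwb _) hebar hecov).trans (integral_congr_ae ?_)
  have hcase' : ∀ᵐ ω ∂P, ec (X ω) = (P[fun ω ↦ if A ω then (1 : ℝ) else 0 | _]) ω ∨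
      μc (X ω) false = (P[Y0 | MeasurableSpace.comap X m𝒳]) ω ∧
        μc (X ω) true = (P[Y1 | MeasurableSpace.comap X m𝒳]) ω :=
    hcase.elim (fun h ↦ h.mono fun _ ↦ Or.inl) fun h ↦ (h.1.and h.2).mono fun _ ↦ Or.inr
  filter_upwards [hecov, hcase'] with ω hecω hcaseω
  exact doubly_robust_conditional_mean _ _ _ _ _ _ _ (by linarith [hecω.1]) (by linarith [hecω.2])
    hcaseω

/-- Under unconfoundedness and overlap, the doubly-robust weighted estimand
equals `E[w(X) τ(X)]` provided either the propensity model or the outcome model is correct. -/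
theorem doubly_robust_weighted_ate {Ω 𝒳 : Type*} [mΩ : MeasurableSpace Ω]
    [StandardBorelSpace Ω] {m𝒳 : MeasurableSpace 𝒳}
    (P : Measure Ω) [IsProbabilityMeasure P]
    (X : Ω → 𝒳) (hX : Measurable X)
    (A : Ω → Bool) (hA : Measurable A)
    (Y0 Y1 : Ω → ℝ) (hY0m : Measurable Y0) (hY1m : Measurable Y1)
    (B : ℝ) (hY0b : ∀ ω, |Y0 ω| ≤ B) (hY1b : ∀ ω, |Y1 ω| ≤ B)
    (hunconf : ProbabilityTheory.CondIndepFun (MeasurableSpace.comap X m𝒳) hX.comap_le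
      (fun ω => (Y0 ω, Y1 ω)) A P)
    (Y : Ω → ℝ) (hYdef : Y = fun ω => if A ω then Y1 ω else Y0 ω)
    (eX : Ω → ℝ)
    (heX : eX = P[fun ω => (if A ω then (1 : ℝ) else 0) | MeasurableSpace.comap X m𝒳])
    (μ0 μ1 : Ω → ℝ)
    (hμ0 : μ0 = P[Y0 | MeasurableSpace.comap X m𝒳])
    (hμ1 : μ1 = P[Y1 | MeasurableSpace.comap X m𝒳])
    (ebar : ℝ) (hebar : 0 < ebar)
    (hoverlap : ∀ᵐ ω ∂P, ebar ≤ eX ω ∧ eX ω ≤ 1 - ebar)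
    (w : 𝒳 → ℝ) (hwm : Measurable w) (Cw : ℝ) (hwb : ∀ x, |w x| ≤ Cw)
    (μc : 𝒳 → Bool → ℝ) (hμcm : ∀ a, Measurable (fun x => μc x a))
    (Cμ : ℝ) (hμcb : ∀ x a, |μc x a| ≤ Cμ)
    (ec : 𝒳 → ℝ) (hecm : Measurable ec)
    (hecov : ∀ᵐ ω ∂P, ebar ≤ ec (X ω) ∧ ec (X ω) ≤ 1 - ebar)
    (hcase : ((fun ω => ec (X ω)) =ᵐ[P] eX) ∨
      (((fun ω => μc (X ω) false) =ᵐ[P] μ0) ∧ ((fun ω => μc (X ω) true) =ᵐ[P] μ1))) :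
    ∫ ω, w (X ω) * (μc (X ω) true - μc (X ω) false +
        ((if A ω then (1 : ℝ) else 0) - ec (X ω)) / (ec (X ω) * (1 - ec (X ω))) *
          (Y ω - μc (X ω) (A ω))) ∂P
      = ∫ ω, w (X ω) * (μ1 ω - μ0 ω) ∂P :=
  doubly_robust_weighted_ate_general (mΩ := mΩ) P X hX A hA Y0 Y1 hY0m hY1m B hY0b hY1b hunconf Y
    hYdef eX heX μ0 μ1 hμ0 hμ1 ebar hebar w hwm Cw hwb μc hμcm Cμ hμcb ec hecm hecov hcase
end

section
/- For every b ≥ 0 and c ∈ ℝ, the infimum of ∫ min(z + c, 0) dν(z) over all Borel probability measures ν supported on [−b, b] satisfying ∫ z dν(z) = 0 equals (1/2)( min(c − b, 0) + min(c + b, 0) ), and it is attained by the measure placing mass 1/2 at −b and mass 1/2 at b. -/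
open MeasureTheory

lemma integrable_dirac'' {f : ℝ → ℝ} (hf : Measurable f) (a : ℝ) :
    Integrable f (Measure.dirac a) := by
  refine ⟨hf.aestronglyMeasurable, ?_⟩
  rw [HasFiniteIntegral, lintegral_dirac' a (by fun_prop)]
  exact ENNReal.coe_lt_top

lemma integral_twoPoint' (b : ℝ) {f : ℝ → ℝ} (hf : Continuous f) :
    ∫ z, f z ∂((2⁻¹ : ENNReal) • Measure.dirac (-b) + (2⁻¹ : ENNReal) • Measure.dirac b)
      = (f (-b) + f b) / 2 := by
  rw [integral_add_measure ((integrable_dirac'' hf.measurable (-b)).smul_measure (by norm_num))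
      ((integrable_dirac'' hf.measurable b).smul_measure (by norm_num)),
    integral_smul_measure, integral_smul_measure,
    integral_dirac' f (-b) hf.stronglyMeasurable, integral_dirac' f b hf.stronglyMeasurable]
  simp [ENNReal.toReal_inv]
  ring

lemma chord (b c z : ℝ) (hb : 0 ≤ b) (hz : z ∈ Set.Icc (-b) b) :
    (min (c - b) 0 + min (c + b) 0) / 2 + (min (c + b) 0 - min (c - b) 0) / (2 * b) * z
      ≤ min (z + c) 0 := by
  obtain ⟨h1, h2⟩ := hz
  rcases eq_or_lt_of_le hb with h | h
  · have hz0 : z = 0 := le_antisymm (by linarith) (by linarith)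
    subst hz0
    simp [← h]
  · have hm1 : min (c - b) 0 ≤ 0 := min_le_right _ _
    have hm2 : min (c + b) 0 ≤ 0 := min_le_right _ _
    have hm3 : min (c - b) 0 ≤ c - b := min_le_left _ _
    have hm4 : min (c + b) 0 ≤ c + b := min_le_left _ _
    have key : (b - z) * min (c - b) 0 + (b + z) * min (c + b) 0 ≤ 2 * b * min (z + c) 0 := by
      rcases le_total (z + c) 0 with hc | hc
      · rw [min_eq_left hc]
        nlinarith
      · rw [min_eq_right hc]
        nlinarith
    have hb2 : (0:ℝ) < 2 * b := by positivity
    rw [div_mul_eq_mul_div, div_add_div _ _ (by norm_num : (2:ℝ) ≠ 0) (ne_of_gt hb2),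
      div_le_iff₀ (by positivity)]
    nlinarith

/-- The measure placing mass `1/2` at `−b` and mass `1/2` at `b`. -/
noncomputable def twoPoint (b : ℝ) : Measure ℝ :=
  (2⁻¹ : ENNReal) • Measure.dirac (-b) + (2⁻¹ : ENNReal) • Measure.dirac b

/-- For `b ≥ 0` and `c ∈ ℝ`, the infimum of `∫ min(z + c, 0) dν` over Borel
probability measures `ν` supported on `[−b, b]` with mean `0` equals
`(1/2)(min(c − b, 0) + min(c + b, 0))`, and is attained by the equal two-point mixture at `±b`. -/
theorem inf_neg_part_mean_zero_bounded_support (b c : ℝ) (hb : 0 ≤ b) :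
    sInf {v : ℝ | ∃ ν : Measure ℝ, IsProbabilityMeasure ν ∧
        (∀ᵐ z ∂ν, z ∈ Set.Icc (-b) b) ∧ (∫ z, z ∂ν) = 0 ∧ v = ∫ z, min (z + c) 0 ∂ν}
      = (1 / 2) * (min (c - b) 0 + min (c + b) 0) ∧
    IsProbabilityMeasure (twoPoint b) ∧
    (∀ᵐ z ∂(twoPoint b), z ∈ Set.Icc (-b) b) ∧
    (∫ z, z ∂(twoPoint b)) = 0 ∧
    (∫ z, min (z + c) 0 ∂(twoPoint b)) = (1 / 2) * (min (c - b) 0 + min (c + b) 0) := by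
  set α : ℝ := (1 / 2) * (min (c - b) 0 + min (c + b) 0) with hα
  -- properties of twoPoint
  have hprob : IsProbabilityMeasure (twoPoint b) := by
    constructor
    simp [twoPoint]
    rw [← two_mul, ENNReal.mul_inv_cancel (by norm_num) (by norm_num)]
  have hae : ∀ᵐ z ∂(twoPoint b), z ∈ Set.Icc (-b) b := by
    rw [twoPoint, ae_add_measure_iff]
    exact ⟨Measure.ae_smul_measure ((ae_dirac_iff measurableSet_Icc).mpr ⟨le_refl _, by linarith⟩) _,
      Measure.ae_smul_measure ((ae_dirac_iff measurableSet_Icc).mpr ⟨by linarith, le_refl _⟩) _⟩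
  have hmean : (∫ z, z ∂(twoPoint b)) = 0 := by
    rw [twoPoint, integral_twoPoint' b continuous_id']
    simp
  have hval : (∫ z, min (z + c) 0 ∂(twoPoint b)) = α := by
    rw [twoPoint, integral_twoPoint' b (by continuity), hα]
    ring_nf
  refine ⟨?_, hprob, hae, hmean, hval⟩
  -- the sInf statement
  have hmem : α ∈ {v : ℝ | ∃ ν : Measure ℝ, IsProbabilityMeasure ν ∧
      (∀ᵐ z ∂ν, z ∈ Set.Icc (-b) b) ∧ (∫ z, z ∂ν) = 0 ∧ v = ∫ z, min (z + c) 0 ∂ν} :=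
    ⟨twoPoint b, hprob, hae, hmean, hval.symm⟩
  have hlb : ∀ v ∈ {v : ℝ | ∃ ν : Measure ℝ, IsProbabilityMeasure ν ∧
      (∀ᵐ z ∂ν, z ∈ Set.Icc (-b) b) ∧ (∫ z, z ∂ν) = 0 ∧ v = ∫ z, min (z + c) 0 ∂ν},
      α ≤ v := by
    rintro v ⟨ν, hν, hsupp, hm, rfl⟩
    set β : ℝ := (min (c + b) 0 - min (c - b) 0) / (2 * b) with hβ
    have hint1 : Integrable (fun z : ℝ => min (z + c) 0) ν := by
      refine Integrable.mono' (integrable_const (b + |c|))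
        ((continuous_id.add continuous_const).min continuous_const).aestronglyMeasurable ?_
      filter_upwards [hsupp] with z hz
      obtain ⟨h1, h2⟩ := hz
      have hz' : |z| ≤ b := abs_le.mpr ⟨h1, h2⟩
      have h3 : |min (z + c) 0| ≤ |z + c| := by
        rcases le_total (z + c) 0 with hc | hc
        · rw [min_eq_left hc]
        · rw [min_eq_right hc]; simp [abs_nonneg]
      calc ‖min (z + c) 0‖ = |min (z + c) 0| := rfl
        _ ≤ |z + c| := h3
        _ ≤ |z| + |c| := abs_add_le _ _
        _ ≤ b + |c| := by linarith
    have hint2 : Integrable (fun z : ℝ => z) ν := by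
      refine Integrable.mono' (integrable_const b) continuous_id.aestronglyMeasurable ?_
      filter_upwards [hsupp] with z hz
      exact abs_le.mpr ⟨hz.1, hz.2⟩
    have hint3 : Integrable
        (fun z : ℝ => (min (c - b) 0 + min (c + b) 0) / 2 + β * z) ν :=
      (integrable_const _).add (hint2.const_mul β)
    have hle : (∫ z, ((min (c - b) 0 + min (c + b) 0) / 2 + β * z) ∂ν)
        ≤ ∫ z, min (z + c) 0 ∂ν := by
      refine integral_mono_ae hint3 hint1 ?_
      filter_upwards [hsupp] with z hz
      have := chord b c z hb hz
      linarith [this]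
    have heq : (∫ z, ((min (c - b) 0 + min (c + b) 0) / 2 + β * z) ∂ν) = α := by
      rw [integral_add (integrable_const _) (hint2.const_mul β), integral_const,
        integral_const_mul, hm]
      simp [hα]
      ring
    rw [← heq] at *
    exact hle
  refine le_antisymm (csInf_le ⟨α, hlb⟩ hmem) (le_csInf ⟨α, hmem⟩ hlb)
end
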